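/- arXiv:1904.06205 — 8 statements merged into one kernel-verified Lean document; each statement's English description precedes it below -/
import Mathlib

section
/- Fix integers N ≥ 1 and K ≥ 2. For each k = 0,…,K−1 let H⁺_{d,k} : ℝ^N × ℝ^N → ℝ be differentiable and let F⁻_{d,k}, F⁺_{d,k} : ℝ^N × ℝ^N → ℝ^N be arbitrary maps. A discrete curve (q_k, p_k)_{k=0,…,K} in ℝ^N × ℝ^N satisfies the discrete Lagrange–d'Alembert equations q_k = D₂H⁺_{d,k−1}(q_{k−1}, p_k) − F⁺_{d,k−1}(q_{k−1}, p_k) and p_k = D₁H⁺_{d,k}(q_k, p_{k+1}) − F⁻_{d,k}(q_k, p_{k+1}) for all k = 1,…,K−1 if and only if for every variation (δq_k, δp_k)_{k=0,…,K} with δq₀ = 0 and δp_K = 0 one has δB_d − Σ_{k=0}^{K−1} ( F⁻_{d,k}(q_k, p_{k+1})·δq_k + F⁺_{d,k}(q_k, p_{k+1})·δp_{k+1} ) = 0, where δB_d denotes the derivative at ε = 0 of ε ↦ B_d[(q_k + ε δq_k, p_k + ε δp_k)_k]. (Pathwise, deterministic form of the discrete stochastic Lagrange–d'Alembert principle in phase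 space, Theorem 3.1.) -/
/-
Expanding `δB_d` and summing by parts (the terms `p_{k+1}·δq_{k+1}` and `δp_{k+1}·q_{k+1}`
telescope), `δB_d` minus the virtual work of the forces becomes the boundary term
`p_0·δq_0 + q_K·δp_K` plus `Σ_k (⟨r_k, δq_k⟩ + ⟨s_{k+1}, δp_{k+1}⟩)`, where `r_k` and `s_k` are
the defects in the equations for `p_k` and `q_k`. The boundary term vanishes for admissible
variations, and testing against a variation supported at one interior index, with value the
defect there, shows that every interior defect vanishes.
-/

noncomputable section
open scoped BigOperators

abbrev E (N : ℕ) : Type := EuclideanSpace ℝ (Fin N)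

noncomputable def D1 {N : ℕ} (H : E N × E N → ℝ) (x y : E N) : E N :=
  gradient (fun x' => H (x', y)) x

noncomputable def D2 {N : ℕ} (H : E N × E N → ℝ) (x y : E N) : E N :=
  gradient (fun y' => H (x, y')) y

noncomputable def Bd {N : ℕ} (K : ℕ) (Hd : ℕ → E N × E N → ℝ) (q p : ℕ → E N) : ℝ :=
  (inner ℝ (p K) (q K) : ℝ) -
    ∑ k ∈ Finset.range K, ((inner ℝ (p (k + 1)) (q (k + 1)) : ℝ) - Hd k (q k, p (k + 1)))

open Finset
open scoped RealInnerProductSpace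

theorem hasDerivAt_inner_add_smul {F : Type*} [NormedAddCommGroup F] [InnerProductSpace ℝ F]
    (u v a b : F) :
    HasDerivAt (fun ε : ℝ => ⟪u + ε • a, v + ε • b⟫) (⟪u, b⟫ + ⟪a, v⟫) 0 := by
  have hline : ∀ w c : F, HasDerivAt (fun ε : ℝ => w + ε • c) c 0 := fun w c => by
    simpa using ((hasDerivAt_id (0 : ℝ)).smul_const c).const_add w
  simpa using (hline u a).inner ℝ (hline v b)

variable {N : ℕ}

theorem fderiv_apply_prod_eq_inner_D1_add_inner_D2 {H : E N × E N → ℝ} {x y : E N}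
    (hH : DifferentiableAt ℝ H (x, y)) (a b : E N) :
    fderiv ℝ H (x, y) (a, b) = ⟪D1 H x y, a⟫ + ⟪D2 H x y, b⟫ := by
  have hx : HasFDerivAt (fun x' => H (x', y))
      ((fderiv ℝ H (x, y)).comp (.inl ℝ (E N) (E N))) x :=
    hH.hasFDerivAt.comp x (hasFDerivAt_prodMk_left x y)
  have hy : HasFDerivAt (fun y' => H (x, y'))
      ((fderiv ℝ H (x, y)).comp (.inr ℝ (E N) (E N))) y :=
    hH.hasFDerivAt.comp y (hasFDerivAt_prodMk_right x y)
  rw [D1, D2, inner_gradient_left, inner_gradient_left, hx.fderiv, hy.fderiv]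
  simp [← map_add]

theorem hasDerivAt_apply_add_smul_prod {H : E N × E N → ℝ} {x y : E N}
    (hH : DifferentiableAt ℝ H (x, y)) (a b : E N) :
    HasDerivAt (fun ε : ℝ => H (x + ε • a, y + ε • b)) (⟪D1 H x y, a⟫ + ⟪D2 H x y, b⟫) 0 := by
  have hline : HasDerivAt (fun ε : ℝ => (x, y) + ε • (a, b)) (a, b) 0 := by
    simpa using ((hasDerivAt_id (0 : ℝ)).smul_const (a, b)).const_add (x, y)
  simpa [← fderiv_apply_prod_eq_inner_D1_add_inner_D2 hH, Function.comp_def]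
    using hH.hasFDerivAt.comp_hasDerivAt_of_eq 0 hline (by simp)

def momentumResidual (Hd : ℕ → E N × E N → ℝ) (Fminus : ℕ → E N × E N → E N) (q p : ℕ → E N)
    (k : ℕ) : E N :=
  D1 (Hd k) (q k) (p (k + 1)) - Fminus k (q k, p (k + 1)) - p k

/- The defect in the equation for `q k`, which involves step `k - 1`; only `1 ≤ k` is meaningful,
since `k - 1` truncates at `0`. -/
def positionResidual (Hd : ℕ → E N × E N → ℝ) (Fplus : ℕ → E N × E N → E N) (q p : ℕ → E N)
    (k : ℕ) : E N :=
  D2 (Hd (k - 1)) (q (k - 1)) (p k) - Fplus (k - 1) (q (k - 1), p k) - q k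

section Variation

variable {K : ℕ} {Hd : ℕ → E N × E N → ℝ} (q p δq δp : ℕ → E N)

theorem hasDerivAt_Bd_add_smul (hHd : ∀ k < K, DifferentiableAt ℝ (Hd k) (q k, p (k + 1))) :
    HasDerivAt (fun ε : ℝ => Bd K Hd (fun k => q k + ε • δq k) (fun k => p k + ε • δp k))
      (⟪p K, δq K⟫ + ⟪δp K, q K⟫ - ∑ k ∈ range K,
        (⟪p (k + 1), δq (k + 1)⟫ + ⟪δp (k + 1), q (k + 1)⟫
          - (⟪D1 (Hd k) (q k) (p (k + 1)), δq k⟫ + ⟪D2 (Hd k) (q k) (p (k + 1)), δp (k + 1)⟫)))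
      0 := by
  have hsum := HasDerivAt.sum (u := range K) fun k hk =>
    (hasDerivAt_inner_add_smul (p (k + 1)) (q (k + 1)) (δp (k + 1)) (δq (k + 1))).sub
      (hasDerivAt_apply_add_smul_prod (hHd k (mem_range.1 hk)) (δq k) (δp (k + 1)))
  simpa only [Bd, sum_fn, Pi.sub_def]
    using (hasDerivAt_inner_add_smul (p K) (q K) (δp K) (δq K)).sub hsum

variable (Fminus Fplus : ℕ → E N × E N → E N)

theorem deriv_Bd_add_smul_sub_virtualWork_eq
    (hHd : ∀ k < K, DifferentiableAt ℝ (Hd k) (q k, p (k + 1))) :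
    deriv (fun ε : ℝ => Bd K Hd (fun k => q k + ε • δq k) (fun k => p k + ε • δp k)) 0
        - ∑ k ∈ range K,
            (⟪Fminus k (q k, p (k + 1)), δq k⟫ + ⟪Fplus k (q k, p (k + 1)), δp (k + 1)⟫)
      = ⟪p 0, δq 0⟫ + ⟪q K, δp K⟫ + ∑ k ∈ range K,
          (⟪momentumResidual Hd Fminus q p k, δq k⟫
            + ⟪positionResidual Hd Fplus q p (k + 1), δp (k + 1)⟫) := by
  rw [(hasDerivAt_Bd_add_smul q p δq δp hHd).deriv]
  simp only [momentumResidual, positionResidual, Nat.add_sub_cancel, inner_sub_left,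
    sum_add_distrib, sum_sub_distrib]
  -- peeling off the first or the last term of a sum over `range (K + 1)` gives the telescoping
  have hpq := sum_range_succ' (fun k => ⟪p k, δq k⟫) K
  have hpq' := sum_range_succ (fun k => ⟪p k, δq k⟫) K
  have hqp := sum_range_succ' (fun k => ⟪q k, δp k⟫) K
  have hqp' := sum_range_succ (fun k => ⟪q k, δp k⟫) K
  simp only [real_inner_comm (q _) (δp _)] at *
  linarith

end Variation

theorem forall_sum_inner_variation_eq_zero_iff {F : Type*} [NormedAddCommGroup F]
    [InnerProductSpace ℝ F] {K : ℕ} {a b : ℕ → F} :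
    (∀ δq δp : ℕ → F, δq 0 = 0 → δp K = 0 →
        ∑ k ∈ range K, (⟪a k, δq k⟫ + ⟪b (k + 1), δp (k + 1)⟫) = 0)
      ↔ ∀ k, 1 ≤ k → k < K → a k = 0 ∧ b k = 0 := by
  constructor
  · intro h k hk hkK
    constructor
    · have := h (Pi.single k (a k)) 0 (by simp [Pi.single_apply]; omega) rfl
      rw [sum_eq_single_of_mem k (mem_range.2 hkK) fun j _ hj => by simp [hj]] at this
      simpa using this
    · have := h 0 (Pi.single k (b k)) rfl (by simp [Pi.single_apply]; omega)
      rw [sum_eq_single_of_mem (k - 1) (mem_range.2 (by omega))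
        fun j _ hj => by simp [show j + 1 ≠ k by omega]] at this
      simpa [Nat.sub_add_cancel hk] using this
  · intro h δq δp hq0 hpK
    refine sum_eq_zero fun k hk => ?_
    have hkK := mem_range.1 hk
    have hq : ⟪a k, δq k⟫ = 0 := by
      rcases Nat.eq_zero_or_pos k with rfl | hk0
      · simp [hq0]
      · simp [(h k hk0 hkK).1]
    have hp : ⟪b (k + 1), δp (k + 1)⟫ = 0 := by
      rcases Nat.lt_or_ge (k + 1) K with hk1 | hk1
      · simp [(h (k + 1) (by omega) hk1).2]
      · simp [show k + 1 = K by omega, hpK]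
    rw [hq, hp, add_zero]

theorem discrete_lagrange_dalembert_principle_general
    {N K : ℕ}
    (Hd : ℕ → E N × E N → ℝ) (Fminus Fplus : ℕ → E N × E N → E N)
    (hHd : ∀ k, Differentiable ℝ (Hd k))
    (q p : ℕ → E N) :
    (∀ k, 1 ≤ k → k ≤ K - 1 →
        q k = D2 (Hd (k - 1)) (q (k - 1)) (p k) - Fplus (k - 1) (q (k - 1), p k) ∧
        p k = D1 (Hd k) (q k) (p (k + 1)) - Fminus k (q k, p (k + 1)))
    ↔
    (∀ δq δp : ℕ → E N, δq 0 = 0 → δp K = 0 →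
      deriv (fun ε : ℝ =>
          Bd K Hd (fun k => q k + ε • δq k) (fun k => p k + ε • δp k)) 0
        - ∑ k ∈ Finset.range K,
            ((inner ℝ (Fminus k (q k, p (k + 1))) (δq k) : ℝ)
              + (inner ℝ (Fplus k (q k, p (k + 1))) (δp (k + 1)) : ℝ)) = 0) := by
  calc _ ↔ ∀ k, 1 ≤ k → k < K →
        momentumResidual Hd Fminus q p k = 0 ∧ positionResidual Hd Fplus q p k = 0 := by
        refine forall_congr' fun k => imp_congr_right fun hk => imp_congr (by omega) ?_
        simp only [momentumResidual, positionResidual, sub_eq_zero]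
        exact and_comm.trans (and_congr eq_comm eq_comm)
    _ ↔ _ := forall_sum_inner_variation_eq_zero_iff.symm
    _ ↔ _ := by
        refine forall₄_congr fun δq δp hq0 hpK => ?_
        rw [deriv_Bd_add_smul_sub_virtualWork_eq q p δq δp Fminus Fplus
          fun k _ => (hHd k).differentiableAt, hq0, hpK, inner_zero_right, inner_zero_right,
          zero_add, zero_add]

/-- **Discrete stochastic Lagrange–d'Alembert principle in phase space** (Theorem 3.1,
pathwise deterministic form): a discrete curve satisfies the discrete Lagrange–d'Alembert
equations for `k = 1,…,K−1` iff for every variation vanishing at `δq₀` and `δp_K`, the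
variation of the discrete action minus the discrete virtual work vanishes. -/
theorem discrete_lagrange_dalembert_principle
    {N K : ℕ} (hN : 1 ≤ N) (hK : 2 ≤ K)
    (Hd : ℕ → E N × E N → ℝ) (Fminus Fplus : ℕ → E N × E N → E N)
    (hHd : ∀ k, Differentiable ℝ (Hd k))
    (q p : ℕ → E N) :
    (∀ k, 1 ≤ k → k ≤ K - 1 →
        q k = D2 (Hd (k - 1)) (q (k - 1)) (p k) - Fplus (k - 1) (q (k - 1), p k) ∧
        p k = D1 (Hd k) (q k) (p (k + 1)) - Fminus k (q k, p (k + 1)))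
    ↔
    (∀ δq δp : ℕ → E N, δq 0 = 0 → δp K = 0 →
      deriv (fun ε : ℝ =>
          Bd K Hd (fun k => q k + ε • δq k) (fun k => p k + ε • δp k)) 0
        - ∑ k ∈ Finset.range K,
            ((inner ℝ (Fminus k (q k, p (k + 1))) (δq k) : ℝ)
              + (inner ℝ (Fplus k (q k, p (k + 1))) (δp (k + 1)) : ℝ)) = 0) :=
  discrete_lagrange_dalembert_principle_general Hd Fminus Fplus hHd q p
end
end

section
/- Fix integers N, m, s ≥ 1, real numbers Δt and ΔW¹,…,ΔW^m, C² Hamiltonians H, h₁,…,h_m : ℝ^N × ℝ^N → ℝ, and C¹ forces F, f₁,…,f_m : ℝ^N × ℝ^N → ℝ^N. Let real coefficients a_{ij}, ā_{ij}, â_{ij}, b_{ij}, b̄_{ij}, b̂_{ij}, α_i, α̂_i, β_i, β̂_i (i,j = 1,…,s) satisfy the symplecticity conditions: α_i ā_{ij} + α_j a_{ji} = α_i α_j, β_i b̄_{ij} + β_j b_{ji} = β_i β_j, β_i ā_{ij} + α_j b_{ji} = β_i α_j, α_i b̄_{ij} + β_j a_{ji} = α_i β_j, α_i â_{ij} + α̂_j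 a_{ji} = α_i α̂_j, α_i b̂_{ij} + β̂_j a_{ji} = α_i β̂_j, β_i â_{ij} + α̂_j b_{ji} = β_i α̂_j, and β_i b̂_{ij} + β̂_j b_{ji} = β_i β̂_j for all i,j. Let U ⊆ ℝ^N × ℝ^N be open and let Q_i, P_i (i = 1,…,s), q₊, p₋ : U → ℝ^N be differentiable maps which, for every (x,y) ∈ U, satisfy the partitioned Runge–Kutta relations with q_k = x, p_{k+1} = y, p_k = p₋(x,y), q_{k+1} = q₊(x,y). Define H⁺_d(x,y) = y·q₊(x,y) − Δt Σ_i α_i ( P_i·∂H/∂p(Q_i,P_i) − H(Q_i,P_i) ) − Σ_r ΔW^r Σ_i β_i ( P_i·∂h_r/∂p(Q_i,P_i) − h_r(Q_i,P_i) ), F⁻_d(x,y) = Δt Σ_i α̂_i (∂Q_i/∂x)ᵀ F(Q_i,P_i) + Σ_r ΔW^r Σ_i β̂_i (∂Q_i/∂x)ᵀ f_r(Q_i,P_i), and F⁺_d(x,y) = Δt Σ_i α̂_i (∂Q_i/∂y)ᵀ F(Q_i,P_i) + Σ_r ΔW^r Σ_i β̂_i (∂Q_i/∂y)ᵀ f_r(Q_i,P_i).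 Then for all (x,y) ∈ U: D₂H⁺_d(x,y) = q₊(x,y) + F⁺_d(x,y) and D₁H⁺_d(x,y) = p₋(x,y) + F⁻_d(x,y). (Pathwise form of Theorem 3.2: the s-stage mean-square Lagrange–d'Alembert partitioned Runge–Kutta method is a stochastic Lagrange–d'Alembert variational integrator.) -/
/-!
Let `δ` denote the derivative at `z` in a direction `(u, v)`. In the Legendre terms
`P_i·∂h/∂p(Q_i, P_i) − h(Q_i, P_i)` the `δP_i` contributions cancel, leaving
`P_i·δ(∂h/∂p) − ∂h/∂q·δQ_i`. Differentiating the relations for `Q_i` and `q₊` writes `δQ_i` and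
`δq₊` through the same variations `δ(∂h_g/∂p(Q_j, P_j))`, and the relations for `P_i` and `p_{k+1}`
write `p_{k+1} − P_i` through `∂h_g/∂q` and the forces. The symplecticity conditions are exactly
what lets the stage coefficients be moved from one factor of the resulting double sums to the other;
afterwards only `p₋·u + q₊·v` and the forces paired with `δQ_i` survive, and the adjoints in
`F⁻_d, F⁺_d` turn the latter into `F⁻_d·u + F⁺_d·v`.

The drift is treated as one more noise channel, `none : Option (Fin m)` with increment `Δt`; the
eight symplecticity conditions then become two conditions over pairs of channels.
-/

noncomputable section
open scoped BigOperators

open Finset InnerProductSpace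

section PartialDerivatives

variable {X Y Z : Type*} [NormedAddCommGroup X] [NormedSpace ℝ X] [NormedAddCommGroup Y]
  [NormedSpace ℝ Y] [NormedAddCommGroup Z] [NormedSpace ℝ Z] {G : X × Y → Z}
  {L : X × Y →L[ℝ] Z} {x : X} {y : Y}

lemma HasFDerivAt.partial_fst (hG : HasFDerivAt G L (x, y)) :
    HasFDerivAt (fun x' => G (x', y)) (L.comp (.inl ℝ X Y)) x :=
  hG.comp (f := fun x' => (x', y)) x (hasFDerivAt_prodMk_left x y)

lemma HasFDerivAt.partial_snd (hG : HasFDerivAt G L (x, y)) :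
    HasFDerivAt (fun y' => G (x, y')) (L.comp (.inr ℝ X Y)) y :=
  hG.comp (f := fun y' => (x, y')) y (hasFDerivAt_prodMk_right x y)

end PartialDerivatives

section PartialGradients

variable {N : ℕ} {G : E N × E N → ℝ} {x y : E N}

lemma fderiv_apply_eq_inner_D1_add_inner_D2 (hG : DifferentiableAt ℝ G (x, y)) (u v : E N) :
    fderiv ℝ G (x, y) (u, v) = ⟪D1 G x y, u⟫_ℝ + ⟪D2 G x y, v⟫_ℝ := by
  rw [D1, D2, gradient, gradient, toDual_symm_apply, toDual_symm_apply,
    hG.hasFDerivAt.partial_fst.fderiv, hG.hasFDerivAt.partial_snd.fderiv,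
    ContinuousLinearMap.comp_apply, ContinuousLinearMap.comp_apply, ← map_add]
  simp

lemma D2_eq_toDual_symm (hG : DifferentiableAt ℝ G (x, y)) :
    D2 G x y = (toDual ℝ (E N)).symm
      ((fderiv ℝ G (x, y)).comp (ContinuousLinearMap.inr ℝ (E N) (E N))) := by
  rw [D2, gradient, hG.hasFDerivAt.partial_snd.fderiv]

lemma differentiable_D2 (hG : ContDiff ℝ 2 G) :
    Differentiable ℝ fun p : E N × E N => D2 G p.1 p.2 := by
  let restrict : ((E N × E N) →L[ℝ] ℝ) →L[ℝ] E N :=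
    (toDual ℝ (E N)).symm.toContinuousLinearEquiv.toContinuousLinearMap.comp
      ((ContinuousLinearMap.compL ℝ (E N) (E N × E N) ℝ).flip
        (ContinuousLinearMap.inr ℝ (E N) (E N)))
  have hD2 : (fun p : E N × E N => D2 G p.1 p.2) = fun p => restrict (fderiv ℝ G p) := by
    funext p
    exact D2_eq_toDual_symm (hG.differentiable two_ne_zero p)
  rw [hD2]
  exact restrict.differentiable.comp ((hG.fderiv_right one_add_one_eq_two.le).differentiable
    one_ne_zero)

lemma D1_eq_of_hasFDerivAt {L : E N × E N →L[ℝ] ℝ} {a : E N} (hG : HasFDerivAt G L (x, y))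
    (hL : ∀ u, L (u, 0) = ⟪a, u⟫_ℝ) : D1 G x y = a := by
  have hdual : L.comp (.inl ℝ (E N) (E N)) = toDual ℝ (E N) a :=
    ContinuousLinearMap.ext fun u => by simp [hL]
  exact (hasGradientAt_iff_hasFDerivAt.mpr (hdual ▸ hG.partial_fst)).gradient

lemma D2_eq_of_hasFDerivAt {L : E N × E N →L[ℝ] ℝ} {b : E N} (hG : HasFDerivAt G L (x, y))
    (hL : ∀ v, L (0, v) = ⟪b, v⟫_ℝ) : D2 G x y = b := by
  have hdual : L.comp (.inr ℝ (E N) (E N)) = toDual ℝ (E N) b :=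
    ContinuousLinearMap.ext fun v => by simp [hL]
  exact (hasGradientAt_iff_hasFDerivAt.mpr (hdual ▸ hG.partial_snd)).gradient

end PartialGradients

section Algebra

variable {V : Type*} [NormedAddCommGroup V] [InnerProductSpace ℝ V]
  {γ ι : Type*} [Fintype γ] [Fintype ι]

def SymplecticCondition (A : γ → ι → ι → ℝ) (al : γ → ι → ℝ) (B : γ → ι → ι → ℝ)
    (be : γ → ι → ℝ) : Prop :=
  ∀ g g' i j, al g i * B g' i j + be g' j * A g j i = al g i * be g' j

lemma sum_sum_sum_sum_comm {M : Type*} [AddCommMonoid M] (f : γ → ι → γ → ι → M) :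
    ∑ g, ∑ i, ∑ g', ∑ j, f g i g' j = ∑ g, ∑ i, ∑ g', ∑ j, f g' j g i := by
  calc ∑ g, ∑ i, ∑ g', ∑ j, f g i g' j = ∑ p : γ × ι, ∑ q : γ × ι, f p.1 p.2 q.1 q.2 := by
        simp only [Fintype.sum_prod_type]
    _ = ∑ q : γ × ι, ∑ p : γ × ι, f p.1 p.2 q.1 q.2 := sum_comm
    _ = _ := by simp only [Fintype.sum_prod_type]

lemma SymplecticCondition.sum_inner_transpose {A B : γ → ι → ι → ℝ} {al be : γ → ι → ℝ}
    (hc : SymplecticCondition A al B be) (c : γ → ℝ) (X δ : γ → ι → V) :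
    ∑ g, c g * ∑ i, al g i * ⟪∑ g', c g' • ∑ j, (be g' j - B g' i j) • X g' j, δ g i⟫_ℝ
      = ∑ g, c g * ∑ i, be g i * ⟪X g i, ∑ g', c g' • ∑ j, A g' i j • δ g' j⟫_ℝ := by
  simp only [sum_inner, inner_sum, real_inner_smul_left, real_inner_smul_right, mul_sum]
  rw [sum_sum_sum_sum_comm]
  refine sum_congr rfl fun g _ => sum_congr rfl fun i _ => sum_congr rfl fun g' _ =>
    sum_congr rfl fun j _ => ?_
  linear_combination -(c g * c g' * ⟪X g i, δ g' j⟫_ℝ) * hc g' g j i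

variable {c : γ → ℝ} {A Abar Ahat : γ → ι → ι → ℝ} {al alh : γ → ι → ℝ}

lemma legendre_variation_eq (hbar : SymplecticCondition A al Abar al)
    (hhat : SymplecticCondition A al Ahat alh) {u y pm δq : V} {P δQ : ι → V}
    {G K δ : γ → ι → V}
    (hδq : δq = u + ∑ g, c g • ∑ i, al g i • δ g i)
    (hδQ : ∀ i, δQ i = u + ∑ g, c g • ∑ j, A g i j • δ g j)
    (hy : y = pm - ∑ g, c g • ∑ i, al g i • G g i + ∑ g, c g • ∑ i, alh g i • K g i)
    (hP : ∀ i, P i = pm - ∑ g, c g • ∑ j, Abar g i j • G g j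
      + ∑ g, c g • ∑ j, Ahat g i j • K g j) :
    ⟪y, δq⟫_ℝ - ∑ g, c g * ∑ i, al g i * (⟪P i, δ g i⟫_ℝ - ⟪G g i, δQ i⟫_ℝ)
      = ⟪pm, u⟫_ℝ + ∑ g, c g * ∑ i, alh g i * ⟪K g i, δQ i⟫_ℝ := by
  have hyP : ∀ i, y - P i = ∑ g, c g • ∑ j, (alh g j - Ahat g i j) • K g j
      - ∑ g, c g • ∑ j, (al g j - Abar g i j) • G g j := by
    intro i
    rw [hy, hP]
    simp only [sub_smul, sum_sub_distrib, smul_sub]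
    abel
  have hAδ : ∀ i, ∑ g, c g • ∑ j, A g i j • δ g j = δQ i - u := fun i => by rw [hδQ]; abel
  have hG := hbar.sum_inner_transpose c G δ
  have hK := hhat.sum_inner_transpose c K δ
  simp only [hAδ] at hG hK
  have hyδ : ∀ g i, ⟪y, δ g i⟫_ℝ - (⟪P i, δ g i⟫_ℝ - ⟪G g i, δQ i⟫_ℝ)
      = ⟪∑ g, c g • ∑ j, (alh g j - Ahat g i j) • K g j, δ g i⟫_ℝ
        - ⟪∑ g, c g • ∑ j, (al g j - Abar g i j) • G g j, δ g i⟫_ℝ + ⟪G g i, δQ i⟫_ℝ := by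
    intro g i
    rw [← inner_sub_left, ← hyP, inner_sub_left]
    ring
  calc ⟪y, δq⟫_ℝ - ∑ g, c g * ∑ i, al g i * (⟪P i, δ g i⟫_ℝ - ⟪G g i, δQ i⟫_ℝ)
      = ⟪y, u⟫_ℝ + ∑ g, c g * ∑ i, al g i *
          (⟪y, δ g i⟫_ℝ - (⟪P i, δ g i⟫_ℝ - ⟪G g i, δQ i⟫_ℝ)) := by
        simp only [hδq, inner_add_right, inner_sum, real_inner_smul_right, mul_sub, mul_sum,
          sum_sub_distrib]
        ring
    _ = ⟪y, u⟫_ℝ + ∑ g, c g * ∑ i, al g i *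
            ⟪∑ g', c g' • ∑ j, (alh g' j - Ahat g' i j) • K g' j, δ g i⟫_ℝ
          - ∑ g, c g * ∑ i, al g i *
            ⟪∑ g', c g' • ∑ j, (al g' j - Abar g' i j) • G g' j, δ g i⟫_ℝ
          + ∑ g, c g * ∑ i, al g i * ⟪G g i, δQ i⟫_ℝ := by
        simp only [hyδ, mul_add, mul_sub, sum_add_distrib, sum_sub_distrib]
        ring
    _ = ⟪y, u⟫_ℝ + ∑ g, c g * ∑ i, alh g i * ⟪K g i, δQ i - u⟫_ℝ
          - ∑ g, c g * ∑ i, al g i * ⟪G g i, δQ i - u⟫_ℝ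
          + ∑ g, c g * ∑ i, al g i * ⟪G g i, δQ i⟫_ℝ := by
        rw [hG, hK]
    _ = ⟪pm, u⟫_ℝ + ∑ g, c g * ∑ i, alh g i * ⟪K g i, δQ i⟫_ℝ := by
        simp only [hy, inner_sub_right, inner_add_left, inner_sub_left, sum_inner,
          real_inner_smul_left, mul_sub, mul_sum, sum_sub_distrib]
        ring

end Algebra

section Linearization

variable {X Y : Type*} [NormedAddCommGroup X] [NormedSpace ℝ X] [NormedAddCommGroup Y]
  [NormedSpace ℝ Y] {γ ι : Type*} [Fintype γ] [Fintype ι]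

lemma hasFDerivAt_of_eventuallyEq_fst_add_sum {f : X × Y → X} {Z : γ → ι → X × Y → X}
    {z : X × Y} (c : γ → ℝ) (k : γ → ι → ℝ) (hZ : ∀ g j, DifferentiableAt ℝ (Z g j) z)
    (hf : f =ᶠ[nhds z] fun w => w.1 + ∑ g, c g • ∑ j, k g j • Z g j w) :
    HasFDerivAt f (.fst ℝ X Y + ∑ g, c g • ∑ j, k g j • fderiv ℝ (Z g j) z) z :=
  (hasFDerivAt_fst.add (HasFDerivAt.fun_sum fun g _ => (HasFDerivAt.fun_sum fun j _ =>
    (hZ g j).hasFDerivAt.const_smul (k g j)).const_smul (c g))).congr_of_eventuallyEq hf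

end Linearization

section Legendre

variable {N : ℕ} {X : Type*} [NormedAddCommGroup X] [NormedSpace ℝ X] {G : E N × E N → ℝ}
  {Q P : X → E N} {z : X}

lemma differentiableAt_D2_comp (hG : ContDiff ℝ 2 G) (hQ : DifferentiableAt ℝ Q z)
    (hP : DifferentiableAt ℝ P z) : DifferentiableAt ℝ (fun w => D2 G (Q w) (P w)) z :=
  (differentiable_D2 hG _).comp z (hQ.prodMk hP)

lemma hasFDerivAt_inner_D2_sub (hG : ContDiff ℝ 2 G) (hQ : DifferentiableAt ℝ Q z)
    (hP : DifferentiableAt ℝ P z) :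
    HasFDerivAt (fun w => ⟪P w, D2 G (Q w) (P w)⟫_ℝ - G (Q w, P w))
      ((innerSL ℝ (P z)).comp (fderiv ℝ (fun w => D2 G (Q w) (P w)) z)
        - (innerSL ℝ (D1 G (Q z) (P z))).comp (fderiv ℝ Q z)) z := by
  have hGQP := ((hG.differentiable two_ne_zero) (Q z, P z)).hasFDerivAt.comp z
    (hQ.hasFDerivAt.prodMk hP.hasFDerivAt)
  refine ((hP.hasFDerivAt.inner ℝ (differentiableAt_D2_comp hG hQ hP).hasFDerivAt).sub
    hGQP).congr_fderiv (ContinuousLinearMap.ext fun d => ?_)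
  simp [fderiv_apply_eq_inner_D1_add_inner_D2 ((hG.differentiable two_ne_zero) (Q z, P z)),
    real_inner_comm]

end Legendre

section Adjoint

variable {X Y V : Type*} [NormedAddCommGroup X] [InnerProductSpace ℝ X] [CompleteSpace X]
  [NormedAddCommGroup Y] [InnerProductSpace ℝ Y] [CompleteSpace Y]
  [NormedAddCommGroup V] [InnerProductSpace ℝ V] [CompleteSpace V]

lemma inner_adjoint_partial_add {Q : X × Y → V} {z : X × Y} (hQ : DifferentiableAt ℝ Q z)
    (k : V) (u : X) (v : Y) :
    ⟪(fderiv ℝ (fun x' => Q (x', z.2)) z.1).adjoint k, u⟫_ℝ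
      + ⟪(fderiv ℝ (fun y' => Q (z.1, y')) z.2).adjoint k, v⟫_ℝ = ⟪k, fderiv ℝ Q z (u, v)⟫_ℝ := by
  have hQ' : HasFDerivAt Q (fderiv ℝ Q z) (z.1, z.2) := hQ.hasFDerivAt
  rw [ContinuousLinearMap.adjoint_inner_left, ContinuousLinearMap.adjoint_inner_left,
    ← inner_add_right, hQ'.partial_fst.fderiv, hQ'.partial_snd.fderiv,
    ContinuousLinearMap.comp_apply, ContinuousLinearMap.comp_apply, ← map_add]
  simp

end Adjoint

section PRK

variable {N : ℕ} {γ ι : Type*} [Fintype γ] [Fintype ι]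

theorem D2_eq_and_D1_eq_of_PRK (c : γ → ℝ) {H : γ → E N × E N → ℝ}
    (hH : ∀ g, ContDiff ℝ 2 (H g)) (K : γ → E N × E N → E N)
    {A Abar Ahat : γ → ι → ι → ℝ} {al alh : γ → ι → ℝ}
    (hbar : SymplecticCondition A al Abar al) (hhat : SymplecticCondition A al Ahat alh)
    {U : Set (E N × E N)} (hU : IsOpen U) {Q P : ι → E N × E N → E N}
    {qplus pminus : E N × E N → E N}
    (hQd : ∀ i, ∀ z ∈ U, DifferentiableAt ℝ (Q i) z)
    (hPd : ∀ i, ∀ z ∈ U, DifferentiableAt ℝ (P i) z)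
    (hQ : ∀ z ∈ U, ∀ i, Q i z = z.1 + ∑ g, c g • ∑ j, A g i j • D2 (H g) (Q j z) (P j z))
    (hP : ∀ z ∈ U, ∀ i, P i z = pminus z - ∑ g, c g • ∑ j, Abar g i j • D1 (H g) (Q j z) (P j z)
      + ∑ g, c g • ∑ j, Ahat g i j • K g (Q j z, P j z))
    (hqp : ∀ z ∈ U, qplus z = z.1 + ∑ g, c g • ∑ i, al g i • D2 (H g) (Q i z) (P i z))
    (hpp : ∀ z ∈ U, z.2 = pminus z - ∑ g, c g • ∑ i, al g i • D1 (H g) (Q i z) (P i z)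
      + ∑ g, c g • ∑ i, alh g i • K g (Q i z, P i z))
    {Hd : E N × E N → ℝ}
    (hHd : ∀ z ∈ U, Hd z = ⟪z.2, qplus z⟫_ℝ
      - ∑ g, c g * ∑ i, al g i * (⟪P i z, D2 (H g) (Q i z) (P i z)⟫_ℝ - H g (Q i z, P i z)))
    {Fminus Fplus : E N × E N → E N}
    (hFm : ∀ z ∈ U, Fminus z = ∑ g, c g • ∑ i, alh g i •
      (fderiv ℝ (fun x' => Q i (x', z.2)) z.1).adjoint (K g (Q i z, P i z)))
    (hFp : ∀ z ∈ U, Fplus z = ∑ g, c g • ∑ i, alh g i •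
      (fderiv ℝ (fun y' => Q i (z.1, y')) z.2).adjoint (K g (Q i z, P i z))) :
    ∀ z ∈ U, D2 Hd z.1 z.2 = qplus z + Fplus z ∧ D1 Hd z.1 z.2 = pminus z + Fminus z := by
  intro z hz
  have hUz : U ∈ nhds z := hU.mem_nhds hz
  have hD2d : ∀ g i, DifferentiableAt ℝ (fun w => D2 (H g) (Q i w) (P i w)) z := fun g i =>
    differentiableAt_D2_comp (hH g) (hQd i z hz) (hPd i z hz)
  have hq := hasFDerivAt_of_eventuallyEq_fst_add_sum c al hD2d
    (Filter.eventuallyEq_of_mem hUz hqp)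
  have hQ' : ∀ i, HasFDerivAt (Q i) _ z := fun i =>
    hasFDerivAt_of_eventuallyEq_fst_add_sum c (A · i) hD2d
      (Filter.eventuallyEq_of_mem hUz fun w hw => hQ w hw i)
  obtain ⟨L, hL, hLuv⟩ : ∃ L, HasFDerivAt Hd L z ∧ ∀ u v,
      L (u, v) = ⟪pminus z + Fminus z, u⟫_ℝ + ⟪qplus z + Fplus z, v⟫_ℝ := by
    refine ⟨_, ((hasFDerivAt_snd.inner ℝ hq).sub (HasFDerivAt.fun_sum fun g _ =>
      (HasFDerivAt.fun_sum fun i _ => (hasFDerivAt_inner_D2_sub (hH g) (hQd i z hz)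
        (hPd i z hz)).const_mul (al g i)).const_mul (c g))).congr_of_eventuallyEq
      (Filter.eventuallyEq_of_mem hUz hHd), fun u v => ?_⟩
    have hforce : ⟪Fminus z, u⟫_ℝ + ⟪Fplus z, v⟫_ℝ
        = ∑ g, c g * ∑ i, alh g i * ⟪K g (Q i z, P i z), fderiv ℝ (Q i) z (u, v)⟫_ℝ := by
      simp only [hFm z hz, hFp z hz, sum_inner, real_inner_smul_left, ← sum_add_distrib,
        ← mul_add, inner_adjoint_partial_add (hQd _ z hz)]
    have hlegendre := legendre_variation_eq hbar hhat (u := u) (y := z.2)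
      (δq := (ContinuousLinearMap.fst ℝ (E N) (E N) + ∑ g, c g • ∑ j, al g j •
        fderiv ℝ (fun w => D2 (H g) (Q j w) (P j w)) z) (u, v))
      (δQ := fun i => fderiv ℝ (Q i) z (u, v)) (P := fun i => P i z)
      (G := fun g i => D1 (H g) (Q i z) (P i z)) (K := fun g i => K g (Q i z, P i z))
      (δ := fun g i => fderiv ℝ (fun w => D2 (H g) (Q i w) (P i w)) z (u, v))
      (by simp) (fun i => by rw [(hQ' i).fderiv]; simp) (hpp z hz) (hP z hz)
    simp only [sub_apply, _root_.sum_apply, smul_apply, ContinuousLinearMap.comp_apply,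
      ContinuousLinearMap.prod_apply, fderivInnerCLM_apply, ContinuousLinearMap.coe_snd',
      innerSL_apply_apply, smul_eq_mul, inner_add_left]
    linarith [real_inner_comm v (qplus z)]
  exact ⟨D2_eq_of_hasFDerivAt hL fun v => by simpa using hLuv 0 v,
    D1_eq_of_hasFDerivAt hL fun u => by simpa using hLuv u 0⟩

end PRK

theorem meanSquare_LdA_PRK_is_variational_integrator_general
    {N m s : ℕ}
    (Δt : ℝ) (ΔW : Fin m → ℝ)
    (H : E N × E N → ℝ) (h : Fin m → E N × E N → ℝ)
    (hH : ContDiff ℝ 2 H) (hh : ∀ r, ContDiff ℝ 2 (h r))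
    (F : E N × E N → E N) (f : Fin m → E N × E N → E N)
    (a abar ahat b bbar bhat : Fin s → Fin s → ℝ)
    (α αhat β βhat : Fin s → ℝ)
    (hc1 : ∀ i j, α i * abar i j + α j * a j i = α i * α j)
    (hc2 : ∀ i j, β i * bbar i j + β j * b j i = β i * β j)
    (hc3 : ∀ i j, β i * abar i j + α j * b j i = β i * α j)
    (hc4 : ∀ i j, α i * bbar i j + β j * a j i = α i * β j)
    (hc5 : ∀ i j, α i * ahat i j + αhat j * a j i = α i * αhat j)
    (hc6 : ∀ i j, α i * bhat i j + βhat j * a j i = α i * βhat j)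
    (hc7 : ∀ i j, β i * ahat i j + αhat j * b j i = β i * αhat j)
    (hc8 : ∀ i j, β i * bhat i j + βhat j * b j i = β i * βhat j)
    (U : Set (E N × E N)) (hU : IsOpen U)
    (Q P : Fin s → E N × E N → E N)
    (qplus pminus : E N × E N → E N)
    (hQdiff : ∀ i, ∀ z ∈ U, DifferentiableAt ℝ (Q i) z)
    (hPdiff : ∀ i, ∀ z ∈ U, DifferentiableAt ℝ (P i) z)
    -- the partitioned Runge–Kutta relations, with q_k = z.1, p_{k+1} = z.2,
    -- p_k = pminus z, q_{k+1} = qplus z: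
    (hQ : ∀ z ∈ U, ∀ i, Q i z = z.1
        + Δt • ∑ j, a i j • D2 H (Q j z) (P j z)
        + ∑ r, ΔW r • ∑ j, b i j • D2 (h r) (Q j z) (P j z))
    (hP : ∀ z ∈ U, ∀ i, P i z = pminus z
        - Δt • ∑ j, abar i j • D1 H (Q j z) (P j z)
        - ∑ r, ΔW r • ∑ j, bbar i j • D1 (h r) (Q j z) (P j z)
        + Δt • ∑ j, ahat i j • F (Q j z, P j z)
        + ∑ r, ΔW r • ∑ j, bhat i j • f r (Q j z, P j z))
    (hqp : ∀ z ∈ U, qplus z = z.1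
        + Δt • ∑ i, α i • D2 H (Q i z) (P i z)
        + ∑ r, ΔW r • ∑ i, β i • D2 (h r) (Q i z) (P i z))
    (hpp : ∀ z ∈ U, z.2 = pminus z
        - Δt • ∑ i, α i • D1 H (Q i z) (P i z)
        - ∑ r, ΔW r • ∑ i, β i • D1 (h r) (Q i z) (P i z)
        + Δt • ∑ i, αhat i • F (Q i z, P i z)
        + ∑ r, ΔW r • ∑ i, βhat i • f r (Q i z, P i z))
    -- the discrete Hamiltonian:
    (Hd : E N × E N → ℝ)
    (hHd : ∀ z : E N × E N, Hd z = (inner ℝ z.2 (qplus z) : ℝ)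
        - Δt * ∑ i, α i *
            ((inner ℝ (P i z) (D2 H (Q i z) (P i z)) : ℝ) - H (Q i z, P i z))
        - ∑ r, ΔW r * ∑ i, β i *
            ((inner ℝ (P i z) (D2 (h r) (Q i z) (P i z)) : ℝ) - h r (Q i z, P i z)))
    -- the discrete forces:
    (Fminus Fplus : E N × E N → E N)
    (hFm : ∀ z : E N × E N, Fminus z =
        Δt • ∑ i, αhat i •
          (ContinuousLinearMap.adjoint (fderiv ℝ (fun x' => Q i (x', z.2)) z.1))
            (F (Q i z, P i z))
        + ∑ r, ΔW r • ∑ i, βhat i •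
          (ContinuousLinearMap.adjoint (fderiv ℝ (fun x' => Q i (x', z.2)) z.1))
            (f r (Q i z, P i z)))
    (hFp : ∀ z : E N × E N, Fplus z =
        Δt • ∑ i, αhat i •
          (ContinuousLinearMap.adjoint (fderiv ℝ (fun y' => Q i (z.1, y')) z.2))
            (F (Q i z, P i z))
        + ∑ r, ΔW r • ∑ i, βhat i •
          (ContinuousLinearMap.adjoint (fderiv ℝ (fun y' => Q i (z.1, y')) z.2))
            (f r (Q i z, P i z))) :
    ∀ z ∈ U, D2 Hd z.1 z.2 = qplus z + Fplus z ∧ D1 Hd z.1 z.2 = pminus z + Fminus z := by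
  have hbar : SymplecticCondition (Option.elim' a fun _ : Fin m => b) (Option.elim' α fun _ => β)
      (Option.elim' abar fun _ => bbar) (Option.elim' α fun _ => β) := by
    rintro (_ | r) (_ | r') i j
    exacts [hc1 i j, hc4 i j, hc3 i j, hc2 i j]
  have hhat : SymplecticCondition (Option.elim' a fun _ : Fin m => b) (Option.elim' α fun _ => β)
      (Option.elim' ahat fun _ => bhat) (Option.elim' αhat fun _ => βhat) := by
    rintro (_ | r) (_ | r') i j
    exacts [hc5 i j, hc6 i j, hc7 i j, hc8 i j]
  refine D2_eq_and_D1_eq_of_PRK (Option.elim' Δt ΔW) (H := Option.elim' H h)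
    (by rintro (_ | r); exacts [hH, hh r]) (Option.elim' F f) hbar hhat hU hQdiff hPdiff
    ?_ ?_ ?_ ?_ ?_ ?_ ?_ <;>
  simp only [Fintype.sum_option, Option.elim'_none, Option.elim'_some]
  · exact fun z hz i => by rw [hQ z hz i, add_assoc]
  · exact fun z hz i => by rw [hP z hz i]; abel
  · exact fun z hz => by rw [hqp z hz, add_assoc]
  · exact fun z hz => by rw [hpp z hz]; abel
  · exact fun z _ => by rw [hHd z]; ring
  · exact fun z _ => hFm z
  · exact fun z _ => hFp z

theorem meanSquare_LdA_PRK_is_variational_integrator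
    {N m s : ℕ} (hN : 1 ≤ N) (hm : 1 ≤ m) (hs : 1 ≤ s)
    (Δt : ℝ) (ΔW : Fin m → ℝ)
    (H : E N × E N → ℝ) (h : Fin m → E N × E N → ℝ)
    (hH : ContDiff ℝ 2 H) (hh : ∀ r, ContDiff ℝ 2 (h r))
    (F : E N × E N → E N) (f : Fin m → E N × E N → E N)
    (hF : ContDiff ℝ 1 F) (hf : ∀ r, ContDiff ℝ 1 (f r))
    (a abar ahat b bbar bhat : Fin s → Fin s → ℝ)
    (α αhat β βhat : Fin s → ℝ)
    (hc1 : ∀ i j, α i * abar i j + α j * a j i = α i * α j)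
    (hc2 : ∀ i j, β i * bbar i j + β j * b j i = β i * β j)
    (hc3 : ∀ i j, β i * abar i j + α j * b j i = β i * α j)
    (hc4 : ∀ i j, α i * bbar i j + β j * a j i = α i * β j)
    (hc5 : ∀ i j, α i * ahat i j + αhat j * a j i = α i * αhat j)
    (hc6 : ∀ i j, α i * bhat i j + βhat j * a j i = α i * βhat j)
    (hc7 : ∀ i j, β i * ahat i j + αhat j * b j i = β i * αhat j)
    (hc8 : ∀ i j, β i * bhat i j + βhat j * b j i = β i * βhat j)
    (U : Set (E N × E N)) (hU : IsOpen U)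
    (Q P : Fin s → E N × E N → E N)
    (qplus pminus : E N × E N → E N)
    (hQdiff : ∀ i, ∀ z ∈ U, DifferentiableAt ℝ (Q i) z)
    (hPdiff : ∀ i, ∀ z ∈ U, DifferentiableAt ℝ (P i) z)
    (hqdiff : ∀ z ∈ U, DifferentiableAt ℝ qplus z)
    (hpdiff : ∀ z ∈ U, DifferentiableAt ℝ pminus z)
    -- the partitioned Runge–Kutta relations, with q_k = z.1, p_{k+1} = z.2,
    -- p_k = pminus z, q_{k+1} = qplus z:
    (hQ : ∀ z ∈ U, ∀ i, Q i z = z.1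
        + Δt • ∑ j, a i j • D2 H (Q j z) (P j z)
        + ∑ r, ΔW r • ∑ j, b i j • D2 (h r) (Q j z) (P j z))
    (hP : ∀ z ∈ U, ∀ i, P i z = pminus z
        - Δt • ∑ j, abar i j • D1 H (Q j z) (P j z)
        - ∑ r, ΔW r • ∑ j, bbar i j • D1 (h r) (Q j z) (P j z)
        + Δt • ∑ j, ahat i j • F (Q j z, P j z)
        + ∑ r, ΔW r • ∑ j, bhat i j • f r (Q j z, P j z))
    (hqp : ∀ z ∈ U, qplus z = z.1
        + Δt • ∑ i, α i • D2 H (Q i z) (P i z)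
        + ∑ r, ΔW r • ∑ i, β i • D2 (h r) (Q i z) (P i z))
    (hpp : ∀ z ∈ U, z.2 = pminus z
        - Δt • ∑ i, α i • D1 H (Q i z) (P i z)
        - ∑ r, ΔW r • ∑ i, β i • D1 (h r) (Q i z) (P i z)
        + Δt • ∑ i, αhat i • F (Q i z, P i z)
        + ∑ r, ΔW r • ∑ i, βhat i • f r (Q i z, P i z))
    -- the discrete Hamiltonian:
    (Hd : E N × E N → ℝ)
    (hHd : ∀ z : E N × E N, Hd z = (inner ℝ z.2 (qplus z) : ℝ)
        - Δt * ∑ i, α i *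
            ((inner ℝ (P i z) (D2 H (Q i z) (P i z)) : ℝ) - H (Q i z, P i z))
        - ∑ r, ΔW r * ∑ i, β i *
            ((inner ℝ (P i z) (D2 (h r) (Q i z) (P i z)) : ℝ) - h r (Q i z, P i z)))
    -- the discrete forces:
    (Fminus Fplus : E N × E N → E N)
    (hFm : ∀ z : E N × E N, Fminus z =
        Δt • ∑ i, αhat i •
          (ContinuousLinearMap.adjoint (fderiv ℝ (fun x' => Q i (x', z.2)) z.1))
            (F (Q i z, P i z))
        + ∑ r, ΔW r • ∑ i, βhat i •
          (ContinuousLinearMap.adjoint (fderiv ℝ (fun x' => Q i (x', z.2)) z.1))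
            (f r (Q i z, P i z)))
    (hFp : ∀ z : E N × E N, Fplus z =
        Δt • ∑ i, αhat i •
          (ContinuousLinearMap.adjoint (fderiv ℝ (fun y' => Q i (z.1, y')) z.2))
            (F (Q i z, P i z))
        + ∑ r, ΔW r • ∑ i, βhat i •
          (ContinuousLinearMap.adjoint (fderiv ℝ (fun y' => Q i (z.1, y')) z.2))
            (f r (Q i z, P i z))) :
    ∀ z ∈ U, D2 Hd z.1 z.2 = qplus z + Fplus z ∧ D1 Hd z.1 z.2 = pminus z + Fminus z :=
  meanSquare_LdA_PRK_is_variational_integrator_general Δt ΔW H h hH hh F f a abar ahat b bbar bhat α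
    αhat β βhat hc1 hc2 hc3 hc4 hc5 hc6 hc7 hc8 U hU Q P qplus pminus hQdiff hPdiff hQ hP hqp hpp Hd
    hHd Fminus Fplus hFm hFp
end
end

section
/- Fix integers N, m, s ≥ 1, real numbers Δt and Î₁,…,Î_m, C² Hamiltonians H, h₁,…,h_m : ℝ^N × ℝ^N → ℝ, and C¹ forces F, f₁,…,f_m : ℝ^N × ℝ^N → ℝ^N. Let real coefficients a⁽⁰⁾_{ij}, a⁽¹⁾_{ij}, b⁽⁰⁾_{ij}, b⁽¹⁾_{ij}, b⁽³⁾_{ij}, α_i, β_i (i,j = 1,…,s) satisfy: α_i a⁽⁰⁾_{ij} + α_j a⁽⁰⁾_{ji} = α_i α_j, α_i b⁽⁰⁾_{ij} + β_j a⁽¹⁾_{ji} = α_i β_j, β_i b⁽¹⁾_{ij} + β_j b⁽¹⁾_{ji} = β_i β_j, and β_i b⁽³⁾_{ij} + β_j b⁽³⁾_{ji} = β_i β_j for all i,j. Let U ⊆ ℝ^N × ℝ^N be open and let Q⁽⁰⁾_i, P⁽⁰⁾_i, Q⁽ˡ⁾_i, P⁽ˡ⁾_i (i = 1,…,s, l =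 1,…,m) and q₊, p₋ : U → ℝ^N be differentiable maps which, for every (x,y) ∈ U, satisfy the weak Runge–Kutta relations with q_k = x, p_{k+1} = y, p_k = p₋(x,y), q_{k+1} = q₊(x,y). Define H⁺_d(x,y) = y·q₊(x,y) − Δt Σ_i α_i ( P⁽⁰⁾_i·∂H/∂p(Q⁽⁰⁾_i,P⁽⁰⁾_i) − H(Q⁽⁰⁾_i,P⁽⁰⁾_i) ) − Σ_r Î_r Σ_i β_i ( P⁽ʳ⁾_i·∂h_r/∂p(Q⁽ʳ⁾_i,P⁽ʳ⁾_i) − h_r(Q⁽ʳ⁾_i,P⁽ʳ⁾_i) ), F⁻_d(x,y) = Δt Σ_i α_i (∂Q⁽⁰⁾_i/∂x)ᵀ F(Q⁽⁰⁾_i,P⁽⁰⁾_i) + Σ_r Î_r Σ_i β_i (∂Q⁽ʳ⁾_i/∂x)ᵀ f_r(Q⁽ʳ⁾_i,P⁽ʳ⁾_i), and F⁺_d(x,y) = Δt Σ_i α_i (∂Q⁽⁰⁾_i/∂y)ᵀ F(Q⁽⁰⁾_i,P⁽⁰⁾_i) + Σ_r Î_r Σ_i β_i (∂Q⁽ʳ⁾_i/∂y)ᵀ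 f_r(Q⁽ʳ⁾_i,P⁽ʳ⁾_i). Then for all (x,y) ∈ U: D₂H⁺_d(x,y) = q₊(x,y) + F⁺_d(x,y) and D₁H⁺_d(x,y) = p₋(x,y) + F⁻_d(x,y). (Pathwise form of Theorem 3.6: the s-stage weak Lagrange–d'Alembert Runge–Kutta method is a stochastic Lagrange–d'Alembert variational integrator.) -/
/-!
Indexing the drift stages by `(none, i)` and the stages driven by the `r`-th noise increment by
`(some r, i)` turns the weak Lagrange–d'Alembert Runge–Kutta method into a single Runge–Kutta
scheme `Q_σ = q + ∑ A_στ ∂H_τ/∂p`, `P_σ = p + ∑ A_στ (-∂H_τ/∂q + F_τ)`, `q₊ = q + ∑ b_σ ∂H_σ/∂p`,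
`y = p + ∑ b_σ (-∂H_σ/∂q + F_σ)`, and the four coefficient conditions become the symplecticity
condition `b_σ A_στ + b_τ A_τσ = b_σ b_τ`.

Differentiate `H⁺_d` in a direction `v`. Since `P_σ·∂H_σ/∂p - H_σ` is the Legendre transform, its
derivative has no `dP_σ` term. Substituting the stage equations, every cross term
`⟨-∂H_σ/∂q + F_σ, d(∂H_τ/∂p)⟩` comes with the coefficient `b_σ b_τ - b_τ A_τσ - b_σ A_στ = 0`.
What is left is `⟨p, v₁⟩ + ⟨q₊, v₂⟩ + ∑ b_σ ⟨F_σ, dQ_σ⟩`, and the last sum is the pairing of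
`(F⁻_d, F⁺_d)` with `v`.
-/

noncomputable section
open scoped BigOperators

open RealInnerProductSpace InnerProductSpace ContinuousLinearMap Topology

section PartialDerivatives

variable {E₁ E₂ F : Type*} [NormedAddCommGroup E₁] [NormedSpace ℝ E₁]
  [NormedAddCommGroup E₂] [NormedSpace ℝ E₂] [NormedAddCommGroup F] [NormedSpace ℝ F]

theorem fderiv_comp_prodMk_left {W : E₁ × E₂ → F} {z : E₁ × E₂}
    (hW : DifferentiableAt ℝ W z) :
    fderiv ℝ (fun x => W (x, z.2)) z.1 = (fderiv ℝ W z).comp (inl ℝ E₁ E₂) :=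
  (hW.hasFDerivAt.comp z.1 (hasFDerivAt_prodMk_left z.1 z.2)).fderiv

theorem fderiv_comp_prodMk_right {W : E₁ × E₂ → F} {z : E₁ × E₂}
    (hW : DifferentiableAt ℝ W z) :
    fderiv ℝ (fun y => W (z.1, y)) z.2 = (fderiv ℝ W z).comp (inr ℝ E₁ E₂) :=
  (hW.hasFDerivAt.comp z.2 (hasFDerivAt_prodMk_right z.1 z.2)).fderiv

theorem fderiv_apply_of_eventuallyEq_fst_add_sum {ι : Type*} [Fintype ι]
    {f : E₁ × E₂ → E₁} {G : ι → E₁ × E₂ → E₁} {c : ι → ℝ} {z : E₁ × E₂}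
    (hf : f =ᶠ[𝓝 z] fun w => w.1 + ∑ τ, c τ • G τ w)
    (hG : ∀ τ, DifferentiableAt ℝ (G τ) z) (v : E₁ × E₂) :
    fderiv ℝ f z v = v.1 + ∑ τ, c τ • fderiv ℝ (G τ) z v := by
  have hR : HasFDerivAt (fun w => w.1 + ∑ τ, c τ • G τ w)
      (fst ℝ E₁ E₂ + ∑ τ, c τ • fderiv ℝ (G τ) z) z :=
    hasFDerivAt_fst.add (HasFDerivAt.fun_sum fun τ _ => (hG τ).hasFDerivAt.const_smul (c τ))
  rw [(hR.congr_of_eventuallyEq hf).fderiv]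
  simp

end PartialDerivatives

section Gradients

variable {N : ℕ} {g : E N × E N → ℝ} {z : E N × E N}

theorem D1_eq_toDual_symm (hg : DifferentiableAt ℝ g z) :
    D1 g z.1 z.2 = (toDual ℝ (E N)).symm ((fderiv ℝ g z).comp (inl ℝ (E N) (E N))) := by
  rw [D1, gradient, fderiv_comp_prodMk_left hg]

theorem D2_eq_toDual_symm_s2 (hg : DifferentiableAt ℝ g z) :
    D2 g z.1 z.2 = (toDual ℝ (E N)).symm ((fderiv ℝ g z).comp (inr ℝ (E N) (E N))) := by
  rw [D2, gradient, fderiv_comp_prodMk_right hg]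

theorem fderiv_apply_eq_inner_D1_add_inner_D2_s2 (hg : DifferentiableAt ℝ g z) (v : E N × E N) :
    fderiv ℝ g z v = ⟪D1 g z.1 z.2, v.1⟫ + ⟪D2 g z.1 z.2, v.2⟫ := by
  rw [D1_eq_toDual_symm hg, D2_eq_toDual_symm_s2 hg, toDual_symm_apply, toDual_symm_apply,
    comp_apply, comp_apply, inl_apply, inr_apply, ← map_add]
  simp

theorem D2_D1_eq_of_fderiv_apply {a b : E N} (hg : DifferentiableAt ℝ g z)
    (h : ∀ v, fderiv ℝ g z v = ⟪a, v.1⟫ + ⟪b, v.2⟫) : D2 g z.1 z.2 = b ∧ D1 g z.1 z.2 = a := by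
  constructor <;> refine ext_inner_right ℝ fun u => ?_
  · simpa using (fderiv_apply_eq_inner_D1_add_inner_D2_s2 hg (0, u)).symm.trans (h (0, u))
  · simpa using (fderiv_apply_eq_inner_D1_add_inner_D2_s2 hg (u, 0)).symm.trans (h (u, 0))

theorem differentiable_D2_s2 (hg : ContDiff ℝ 2 g) :
    Differentiable ℝ fun w : E N × E N => D2 g w.1 w.2 := by
  have hD2 : (fun w : E N × E N => D2 g w.1 w.2) =
      fun w => (toDual ℝ (E N)).symm ((fderiv ℝ g w).comp (inr ℝ (E N) (E N))) :=
    funext fun w => D2_eq_toDual_symm_s2 (hg.differentiable two_ne_zero w)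
  rw [hD2]
  exact ((toDual ℝ (E N)).symm.contDiff.comp
    ((hg.fderiv_right (m := 1) le_rfl).clm_comp contDiff_const)).differentiable one_ne_zero

end Gradients

def IsSymplecticRK {ι : Type*} (A : ι → ι → ℝ) (b : ι → ℝ) : Prop :=
  ∀ σ τ, b σ * A σ τ + b τ * A τ σ = b σ * b τ

theorem inner_sub_sum_eq_of_isSymplecticRK {V ι : Type*} [NormedAddCommGroup V]
    [InnerProductSpace ℝ V] [Fintype ι] {A : ι → ι → ℝ} {b : ι → ℝ} (hA : IsSymplecticRK A b)
    {p v y dq : V} {g dG P dQ : ι → V}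
    (hP : ∀ σ, P σ = p + ∑ τ, A σ τ • g τ) (hdQ : ∀ σ, dQ σ = v + ∑ τ, A σ τ • dG τ)
    (hy : y = p + ∑ σ, b σ • g σ) (hdq : dq = v + ∑ σ, b σ • dG σ) :
    ⟪y, dq⟫ - ∑ σ, b σ * (⟪P σ, dG σ⟫ + ⟪g σ, dQ σ⟫) = ⟪p, v⟫ := by
  have hyq : ⟪y, dq⟫ = ⟪p, v⟫ + ∑ σ, b σ * ⟪p, dG σ⟫ + ∑ σ, b σ * ⟪g σ, v⟫
      + ∑ σ, ∑ τ, b σ * b τ * ⟪g τ, dG σ⟫ := by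
    simp only [hy, hdq, inner_add_left, inner_add_right, sum_inner, inner_sum,
      real_inner_smul_left, real_inner_smul_right, Finset.sum_add_distrib, mul_assoc]
    ring
  have hPdG : ∑ σ, b σ * ⟪P σ, dG σ⟫ = ∑ σ, b σ * ⟪p, dG σ⟫
      + ∑ σ, ∑ τ, b σ * A σ τ * ⟪g τ, dG σ⟫ := by
    simp only [hP, inner_add_left, sum_inner, real_inner_smul_left, mul_add, Finset.mul_sum,
      Finset.sum_add_distrib, mul_assoc]
  have hgdQ : ∑ σ, b σ * ⟪g σ, dQ σ⟫ = ∑ σ, b σ * ⟪g σ, v⟫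
      + ∑ σ, ∑ τ, b σ * A σ τ * ⟪g σ, dG τ⟫ := by
    simp only [hdQ, inner_add_right, inner_sum, real_inner_smul_right, mul_add, Finset.mul_sum,
      Finset.sum_add_distrib, mul_assoc]
  have hsymp : ∑ σ, ∑ τ, b σ * b τ * ⟪g τ, dG σ⟫
      = ∑ σ, ∑ τ, b σ * A σ τ * ⟪g τ, dG σ⟫ + ∑ σ, ∑ τ, b σ * A σ τ * ⟪g σ, dG τ⟫ := by
    rw [Finset.sum_comm (f := fun σ τ => b σ * A σ τ * ⟪g σ, dG τ⟫)]
    simp only [← Finset.sum_add_distrib, ← add_mul, hA _ _]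
  simp only [mul_add, Finset.sum_add_distrib]
  linear_combination hyq - hPdG - hgdQ + hsymp

section DiscreteHamiltonian

variable {N : ℕ}

def legendreTransform (g : E N × E N → ℝ) (q p : E N) : ℝ :=
  ⟪p, D2 g q p⟫ - g (q, p)

theorem differentiableAt_legendreTransform_comp {g : E N × E N → ℝ} (hg : ContDiff ℝ 2 g)
    {Q P : E N × E N → E N} {z : E N × E N} (hQ : DifferentiableAt ℝ Q z)
    (hP : DifferentiableAt ℝ P z) :
    DifferentiableAt ℝ (fun w => legendreTransform g (Q w) (P w)) z :=
  (hP.inner ℝ ((differentiable_D2_s2 hg _).comp z (hQ.prodMk hP))).sub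
    ((hg.differentiable two_ne_zero _).comp z (hQ.prodMk hP))

theorem fderiv_legendreTransform_comp_apply {g : E N × E N → ℝ} (hg : ContDiff ℝ 2 g)
    {Q P : E N × E N → E N} {z : E N × E N} (hQ : DifferentiableAt ℝ Q z)
    (hP : DifferentiableAt ℝ P z) (v : E N × E N) :
    fderiv ℝ (fun w => legendreTransform g (Q w) (P w)) z v
      = ⟪P z, fderiv ℝ (fun w => D2 g (Q w) (P w)) z v⟫
        - ⟪D1 g (Q z) (P z), fderiv ℝ Q z v⟫ := by
  have hG : DifferentiableAt ℝ (fun w => D2 g (Q w) (P w)) z :=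
    (differentiable_D2_s2 hg _).comp z (hQ.prodMk hP)
  have hgQP : DifferentiableAt ℝ g (Q z, P z) := hg.differentiable two_ne_zero _
  have hgc : HasFDerivAt (fun w => g (Q w, P w))
      ((fderiv ℝ g (Q z, P z)).comp ((fderiv ℝ Q z).prod (fderiv ℝ P z))) z :=
    hgQP.hasFDerivAt.comp z (hQ.hasFDerivAt.prodMk hP.hasFDerivAt)
  have hchain : fderiv ℝ (fun w => g (Q w, P w)) z v
      = ⟪D1 g (Q z) (P z), fderiv ℝ Q z v⟫ + ⟪D2 g (Q z) (P z), fderiv ℝ P z v⟫ := by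
    rw [hgc.fderiv, comp_apply, ContinuousLinearMap.prod_apply,
      fderiv_apply_eq_inner_D1_add_inner_D2_s2 hgQP]
  unfold legendreTransform
  rw [fderiv_fun_sub (hP.inner ℝ hG) hgc.differentiableAt, sub_apply,
    fderiv_inner_apply ℝ hP hG, hchain, real_inner_comm (fderiv ℝ P z v)]
  ring

variable {ι : Type*} [Fintype ι]

def discreteHamiltonian (b : ι → ℝ) (Hs : ι → E N × E N → ℝ) (Q P : ι → E N × E N → E N)
    (qp : E N × E N → E N) (z : E N × E N) : ℝ :=
  ⟪z.2, qp z⟫ - ∑ σ, b σ * legendreTransform (Hs σ) (Q σ z) (P σ z)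

def discreteForceMinus (b : ι → ℝ) (Fs : ι → E N × E N → E N) (Q P : ι → E N × E N → E N)
    (z : E N × E N) : E N :=
  ∑ σ, b σ • adjoint (fderiv ℝ (fun x => Q σ (x, z.2)) z.1) (Fs σ (Q σ z, P σ z))

def discreteForcePlus (b : ι → ℝ) (Fs : ι → E N × E N → E N) (Q P : ι → E N × E N → E N)
    (z : E N × E N) : E N :=
  ∑ σ, b σ • adjoint (fderiv ℝ (fun y => Q σ (z.1, y)) z.2) (Fs σ (Q σ z, P σ z))

variable {b : ι → ℝ} {Hs : ι → E N × E N → ℝ} {Q P : ι → E N × E N → E N}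
  {qp : E N × E N → E N} {z : E N × E N}

theorem differentiableAt_discreteHamiltonian (hHs : ∀ σ, ContDiff ℝ 2 (Hs σ))
    (hQ : ∀ σ, DifferentiableAt ℝ (Q σ) z) (hP : ∀ σ, DifferentiableAt ℝ (P σ) z)
    (hqp : DifferentiableAt ℝ qp z) :
    DifferentiableAt ℝ (discreteHamiltonian b Hs Q P qp) z :=
  (differentiableAt_snd.inner ℝ hqp).sub (DifferentiableAt.fun_sum fun σ _ =>
    (differentiableAt_legendreTransform_comp (hHs σ) (hQ σ) (hP σ)).const_mul (b σ))

theorem fderiv_discreteHamiltonian_apply (hHs : ∀ σ, ContDiff ℝ 2 (Hs σ))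
    (hQ : ∀ σ, DifferentiableAt ℝ (Q σ) z) (hP : ∀ σ, DifferentiableAt ℝ (P σ) z)
    (hqp : DifferentiableAt ℝ qp z) (v : E N × E N) :
    fderiv ℝ (discreteHamiltonian b Hs Q P qp) z v
      = ⟪v.2, qp z⟫ + ⟪z.2, fderiv ℝ qp z v⟫
        - ∑ σ, b σ * (⟪P σ z, fderiv ℝ (fun w => D2 (Hs σ) (Q σ w) (P σ w)) z v⟫
            - ⟪D1 (Hs σ) (Q σ z) (P σ z), fderiv ℝ (Q σ) z v⟫) := by
  have hL σ := differentiableAt_legendreTransform_comp (hHs σ) (hQ σ) (hP σ)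
  have hbL σ : DifferentiableAt ℝ (fun w => b σ * legendreTransform (Hs σ) (Q σ w) (P σ w)) z :=
    (hL σ).const_mul (b σ)
  unfold discreteHamiltonian
  rw [fderiv_fun_sub (differentiableAt_snd.inner ℝ hqp)
      (DifferentiableAt.fun_sum fun σ _ => hbL σ), sub_apply,
    fderiv_inner_apply ℝ differentiableAt_snd hqp, fderiv_snd, coe_snd',
    fderiv_fun_sum fun σ _ => hbL σ, sum_apply]
  simp only [fderiv_const_mul (hL _), smul_apply, smul_eq_mul,
    fderiv_legendreTransform_comp_apply (hHs _) (hQ _) (hP _)]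
  ring

theorem inner_discreteForceMinus_add_inner_discreteForcePlus {Fs : ι → E N × E N → E N}
    (hQ : ∀ σ, DifferentiableAt ℝ (Q σ) z) (v : E N × E N) :
    ⟪discreteForceMinus b Fs Q P z, v.1⟫ + ⟪discreteForcePlus b Fs Q P z, v.2⟫
      = ∑ σ, b σ * ⟪Fs σ (Q σ z, P σ z), fderiv ℝ (Q σ) z v⟫ := by
  simp only [discreteForceMinus, discreteForcePlus, sum_inner, real_inner_smul_left,
    ← Finset.sum_add_distrib, ← mul_add, adjoint_inner_left, ← inner_add_right,
    fderiv_comp_prodMk_left (hQ _), fderiv_comp_prodMk_right (hQ _), comp_apply, inl_apply,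
    inr_apply, ← map_add]
  simp

end DiscreteHamiltonian

theorem D2_D1_discreteHamiltonian_of_isSymplecticRK {N : ℕ} {ι : Type*} [Fintype ι]
    {A : ι → ι → ℝ} {b : ι → ℝ} (hA : IsSymplecticRK A b)
    {Hs : ι → E N × E N → ℝ} (hHs : ∀ σ, ContDiff ℝ 2 (Hs σ)) (Fs : ι → E N × E N → E N)
    {U : Set (E N × E N)} (hU : IsOpen U) {Q P : ι → E N × E N → E N} {qp pm : E N × E N → E N}
    (hQd : ∀ σ, ∀ z ∈ U, DifferentiableAt ℝ (Q σ) z)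
    (hPd : ∀ σ, ∀ z ∈ U, DifferentiableAt ℝ (P σ) z)
    (hqd : ∀ z ∈ U, DifferentiableAt ℝ qp z)
    (hQ : ∀ z ∈ U, ∀ σ, Q σ z = z.1 + ∑ τ, A σ τ • D2 (Hs τ) (Q τ z) (P τ z))
    (hP : ∀ z ∈ U, ∀ σ, P σ z = pm z
      + ∑ τ, A σ τ • (-D1 (Hs τ) (Q τ z) (P τ z) + Fs τ (Q τ z, P τ z)))
    (hq : ∀ z ∈ U, qp z = z.1 + ∑ σ, b σ • D2 (Hs σ) (Q σ z) (P σ z))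
    (hp : ∀ z ∈ U, z.2 = pm z
      + ∑ σ, b σ • (-D1 (Hs σ) (Q σ z) (P σ z) + Fs σ (Q σ z, P σ z)))
    {z : E N × E N} (hz : z ∈ U) :
    D2 (discreteHamiltonian b Hs Q P qp) z.1 z.2 = qp z + discreteForcePlus b Fs Q P z ∧
      D1 (discreteHamiltonian b Hs Q P qp) z.1 z.2 = pm z + discreteForceMinus b Fs Q P z := by
  have hQz σ := hQd σ z hz
  have hPz σ := hPd σ z hz
  refine D2_D1_eq_of_fderiv_apply
    (differentiableAt_discreteHamiltonian hHs hQz hPz (hqd z hz)) fun v => ?_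
  set G : ι → E N × E N → E N := fun σ w => D2 (Hs σ) (Q σ w) (P σ w)
  have hG σ : DifferentiableAt ℝ (G σ) z :=
    (differentiable_D2_s2 (hHs σ) _).comp z ((hQz σ).prodMk (hPz σ))
  have hdQ σ : fderiv ℝ (Q σ) z v = v.1 + ∑ τ, A σ τ • fderiv ℝ (G τ) z v :=
    fderiv_apply_of_eventuallyEq_fst_add_sum
      (Filter.eventually_of_mem (hU.mem_nhds hz) fun w hw => hQ w hw σ) hG v
  have hdq : fderiv ℝ qp z v = v.1 + ∑ σ, b σ • fderiv ℝ (G σ) z v :=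
    fderiv_apply_of_eventuallyEq_fst_add_sum
      (Filter.eventually_of_mem (hU.mem_nhds hz) fun w hw => hq w hw) hG v
  have hsplit : ∑ σ, b σ * (⟪P σ z, fderiv ℝ (G σ) z v⟫
        + ⟪-D1 (Hs σ) (Q σ z) (P σ z) + Fs σ (Q σ z, P σ z), fderiv ℝ (Q σ) z v⟫)
      = ∑ σ, b σ * (⟪P σ z, fderiv ℝ (G σ) z v⟫
          - ⟪D1 (Hs σ) (Q σ z) (P σ z), fderiv ℝ (Q σ) z v⟫)
        + ∑ σ, b σ * ⟪Fs σ (Q σ z, P σ z), fderiv ℝ (Q σ) z v⟫ := by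
    rw [← Finset.sum_add_distrib]
    refine Finset.sum_congr rfl fun σ _ => ?_
    rw [inner_add_left, inner_neg_left]
    ring
  rw [fderiv_discreteHamiltonian_apply hHs hQz hPz (hqd z hz), inner_add_left, inner_add_left]
  linear_combination inner_sub_sum_eq_of_isSymplecticRK hA (hP z hz) hdQ (hp z hz) hdq + hsplit
    - inner_discreteForceMinus_add_inner_discreteForcePlus (b := b) (Fs := Fs) (P := P) hQz v
    - real_inner_comm v.2 (qp z)

section WeakLdA

variable {m s : ℕ} (Δt : ℝ) (Ihat : Fin m → ℝ)

def weakLdAWeight (α β : Fin s → ℝ) : Option (Fin m) × Fin s → ℝ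
  | (none, i) => Δt * α i
  | (some r, i) => Ihat r * β i

def weakLdACoeff (a0 a1 b0 b1 b3 : Fin s → Fin s → ℝ) :
    Option (Fin m) × Fin s → Option (Fin m) × Fin s → ℝ
  | (none, i), (none, j) => Δt * a0 i j
  | (none, i), (some r, j) => Ihat r * b0 i j
  | (some _, i), (none, j) => Δt * a1 i j
  | (some l, i), (some r, j) => Ihat r * if r = l then b1 i j else b3 i j

variable {Δt Ihat} {a0 a1 b0 b1 b3 : Fin s → Fin s → ℝ} {α β : Fin s → ℝ}

theorem weakLdA_isSymplecticRK
    (hc1 : ∀ i j, α i * a0 i j + α j * a0 j i = α i * α j)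
    (hc2 : ∀ i j, α i * b0 i j + β j * a1 j i = α i * β j)
    (hc3 : ∀ i j, β i * b1 i j + β j * b1 j i = β i * β j)
    (hc4 : ∀ i j, β i * b3 i j + β j * b3 j i = β i * β j) :
    IsSymplecticRK (weakLdACoeff Δt Ihat a0 a1 b0 b1 b3) (weakLdAWeight Δt Ihat α β) := by
  intro σ τ
  obtain ⟨_ | l, i⟩ := σ <;> obtain ⟨_ | r, j⟩ := τ <;> simp only [weakLdAWeight, weakLdACoeff]
  · linear_combination Δt ^ 2 * hc1 i j
  · linear_combination Δt * Ihat r * hc2 i j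
  · linear_combination Δt * Ihat l * hc2 j i
  · by_cases hrl : r = l
    · subst hrl
      simp only [if_pos]
      linear_combination Ihat r ^ 2 * hc3 i j
    · simp only [if_neg hrl, if_neg (Ne.symm hrl)]
      linear_combination Ihat l * Ihat r * hc4 i j

variable {V : Type*} [AddCommGroup V] [Module ℝ V]

theorem sum_weakLdAWeight_smul (Y : Option (Fin m) × Fin s → V) :
    ∑ σ, weakLdAWeight Δt Ihat α β σ • Y σ
      = Δt • ∑ i, α i • Y (none, i) + ∑ r, Ihat r • ∑ i, β i • Y (some r, i) := by
  simp [Fintype.sum_prod_type, weakLdAWeight, mul_smul, Finset.smul_sum]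

theorem sum_weakLdAWeight_mul (y : Option (Fin m) × Fin s → ℝ) :
    ∑ σ, weakLdAWeight Δt Ihat α β σ * y σ
      = Δt * ∑ i, α i * y (none, i) + ∑ r, Ihat r * ∑ i, β i * y (some r, i) := by
  simpa only [smul_eq_mul] using sum_weakLdAWeight_smul y

theorem sum_weakLdACoeff_none_smul (i : Fin s) (Y : Option (Fin m) × Fin s → V) :
    ∑ τ, weakLdACoeff Δt Ihat a0 a1 b0 b1 b3 (none, i) τ • Y τ
      = Δt • ∑ j, a0 i j • Y (none, j) + ∑ r, Ihat r • ∑ j, b0 i j • Y (some r, j) := by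
  simp [Fintype.sum_prod_type, weakLdACoeff, mul_smul, Finset.smul_sum]

theorem sum_weakLdACoeff_some_smul (l : Fin m) (i : Fin s) (Y : Option (Fin m) × Fin s → V) :
    ∑ τ, weakLdACoeff Δt Ihat a0 a1 b0 b1 b3 (some l, i) τ • Y τ
      = Δt • ∑ j, a1 i j • Y (none, j) + Ihat l • ∑ j, b1 i j • Y (some l, j)
        + ∑ r ∈ Finset.univ.erase l, Ihat r • ∑ j, b3 i j • Y (some r, j) := by
  simp [Fintype.sum_prod_type, weakLdACoeff, mul_smul, Finset.smul_sum, ite_smul,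
    Finset.sum_ite, Finset.filter_ne', Finset.filter_eq', add_assoc]

end WeakLdA

theorem weak_LdA_RK_is_variational_integrator_general
    {N m s : ℕ}
    (Δt : ℝ) (Ihat : Fin m → ℝ)
    (H : E N × E N → ℝ) (h : Fin m → E N × E N → ℝ)
    (hH : ContDiff ℝ 2 H) (hh : ∀ r, ContDiff ℝ 2 (h r))
    (F : E N × E N → E N) (f : Fin m → E N × E N → E N)
    (a0 a1 b0 b1 b3 : Fin s → Fin s → ℝ) (α β : Fin s → ℝ)
    (hc1 : ∀ i j, α i * a0 i j + α j * a0 j i = α i * α j)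
    (hc2 : ∀ i j, α i * b0 i j + β j * a1 j i = α i * β j)
    (hc3 : ∀ i j, β i * b1 i j + β j * b1 j i = β i * β j)
    (hc4 : ∀ i j, β i * b3 i j + β j * b3 j i = β i * β j)
    (U : Set (E N × E N)) (hU : IsOpen U)
    (Q0 P0 : Fin s → E N × E N → E N)
    (Qr Pr : Fin m → Fin s → E N × E N → E N)
    (qplus pminus : E N × E N → E N)
    (hQ0diff : ∀ i, ∀ z ∈ U, DifferentiableAt ℝ (Q0 i) z)
    (hP0diff : ∀ i, ∀ z ∈ U, DifferentiableAt ℝ (P0 i) z)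
    (hQrdiff : ∀ l i, ∀ z ∈ U, DifferentiableAt ℝ (Qr l i) z)
    (hPrdiff : ∀ l i, ∀ z ∈ U, DifferentiableAt ℝ (Pr l i) z)
    (hqdiff : ∀ z ∈ U, DifferentiableAt ℝ qplus z)
    -- the weak Runge–Kutta relations, with q_k = z.1, p_{k+1} = z.2,
    -- p_k = pminus z, q_{k+1} = qplus z:
    (hQ0 : ∀ z ∈ U, ∀ i, Q0 i z = z.1
        + Δt • ∑ j, a0 i j • D2 H (Q0 j z) (P0 j z)
        + ∑ r, Ihat r • ∑ j, b0 i j • D2 (h r) (Qr r j z) (Pr r j z))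
    (hP0 : ∀ z ∈ U, ∀ i, P0 i z = pminus z
        + Δt • ∑ j, a0 i j • (-D1 H (Q0 j z) (P0 j z) + F (Q0 j z, P0 j z))
        + ∑ r, Ihat r • ∑ j, b0 i j •
            (-D1 (h r) (Qr r j z) (Pr r j z) + f r (Qr r j z, Pr r j z)))
    (hQl : ∀ z ∈ U, ∀ l i, Qr l i z = z.1
        + Δt • ∑ j, a1 i j • D2 H (Q0 j z) (P0 j z)
        + Ihat l • ∑ j, b1 i j • D2 (h l) (Qr l j z) (Pr l j z)
        + ∑ r ∈ Finset.univ.erase l, Ihat r • ∑ j, b3 i j • D2 (h r) (Qr r j z) (Pr r j z))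
    (hPl : ∀ z ∈ U, ∀ l i, Pr l i z = pminus z
        + Δt • ∑ j, a1 i j • (-D1 H (Q0 j z) (P0 j z) + F (Q0 j z, P0 j z))
        + Ihat l • ∑ j, b1 i j •
            (-D1 (h l) (Qr l j z) (Pr l j z) + f l (Qr l j z, Pr l j z))
        + ∑ r ∈ Finset.univ.erase l, Ihat r • ∑ j, b3 i j •
            (-D1 (h r) (Qr r j z) (Pr r j z) + f r (Qr r j z, Pr r j z)))
    (hqp : ∀ z ∈ U, qplus z = z.1
        + Δt • ∑ i, α i • D2 H (Q0 i z) (P0 i z)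
        + ∑ r, Ihat r • ∑ i, β i • D2 (h r) (Qr r i z) (Pr r i z))
    (hpp : ∀ z ∈ U, z.2 = pminus z
        + Δt • ∑ i, α i • (-D1 H (Q0 i z) (P0 i z) + F (Q0 i z, P0 i z))
        + ∑ r, Ihat r • ∑ i, β i •
            (-D1 (h r) (Qr r i z) (Pr r i z) + f r (Qr r i z, Pr r i z)))
    -- the discrete Hamiltonian:
    (Hd : E N × E N → ℝ)
    (hHd : ∀ z : E N × E N, Hd z = (inner ℝ z.2 (qplus z) : ℝ)
        - Δt * ∑ i, α i *
            ((inner ℝ (P0 i z) (D2 H (Q0 i z) (P0 i z)) : ℝ) - H (Q0 i z, P0 i z))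
        - ∑ r, Ihat r * ∑ i, β i *
            ((inner ℝ (Pr r i z) (D2 (h r) (Qr r i z) (Pr r i z)) : ℝ)
              - h r (Qr r i z, Pr r i z)))
    -- the discrete forces:
    (Fminus Fplus : E N × E N → E N)
    (hFm : ∀ z : E N × E N, Fminus z =
        Δt • ∑ i, α i •
          (ContinuousLinearMap.adjoint (fderiv ℝ (fun x' => Q0 i (x', z.2)) z.1))
            (F (Q0 i z, P0 i z))
        + ∑ r, Ihat r • ∑ i, β i •
          (ContinuousLinearMap.adjoint (fderiv ℝ (fun x' => Qr r i (x', z.2)) z.1))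
            (f r (Qr r i z, Pr r i z)))
    (hFp : ∀ z : E N × E N, Fplus z =
        Δt • ∑ i, α i •
          (ContinuousLinearMap.adjoint (fderiv ℝ (fun y' => Q0 i (z.1, y')) z.2))
            (F (Q0 i z, P0 i z))
        + ∑ r, Ihat r • ∑ i, β i •
          (ContinuousLinearMap.adjoint (fderiv ℝ (fun y' => Qr r i (z.1, y')) z.2))
            (f r (Qr r i z, Pr r i z))) :
    ∀ z ∈ U, D2 Hd z.1 z.2 = qplus z + Fplus z ∧ D1 Hd z.1 z.2 = pminus z + Fminus z := by
  intro z hz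
  let Hs : Option (Fin m) × Fin s → E N × E N → ℝ := fun σ => σ.1.elim H h
  let Fs : Option (Fin m) × Fin s → E N × E N → E N := fun σ => σ.1.elim F f
  let Q : Option (Fin m) × Fin s → E N × E N → E N := fun σ => σ.1.elim (Q0 σ.2) (Qr · σ.2)
  let P : Option (Fin m) × Fin s → E N × E N → E N := fun σ => σ.1.elim (P0 σ.2) (Pr · σ.2)
  let b := weakLdAWeight Δt Ihat α β
  have hHd' : Hd = discreteHamiltonian b Hs Q P qplus := funext fun w => by
    rw [hHd, discreteHamiltonian, sum_weakLdAWeight_mul, sub_sub]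
    rfl
  have hFm' : Fminus z = discreteForceMinus b Fs Q P z := by
    rw [hFm, discreteForceMinus, sum_weakLdAWeight_smul]
    rfl
  have hFp' : Fplus z = discreteForcePlus b Fs Q P z := by
    rw [hFp, discreteForcePlus, sum_weakLdAWeight_smul]
    rfl
  rw [hHd', hFm', hFp']
  refine D2_D1_discreteHamiltonian_of_isSymplecticRK (weakLdA_isSymplecticRK hc1 hc2 hc3 hc4)
    (by rintro ⟨_ | l, i⟩; exacts [hH, hh l]) Fs hU
    (by rintro ⟨_ | l, i⟩; exacts [hQ0diff i, hQrdiff l i])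
    (by rintro ⟨_ | l, i⟩; exacts [hP0diff i, hPrdiff l i]) hqdiff ?_ ?_ ?_ ?_ hz
  · rintro w hw ⟨_ | l, i⟩
    · rw [sum_weakLdACoeff_none_smul, ← add_assoc]; exact hQ0 w hw i
    · rw [sum_weakLdACoeff_some_smul, ← add_assoc, ← add_assoc]; exact hQl w hw l i
  · rintro w hw ⟨_ | l, i⟩
    · rw [sum_weakLdACoeff_none_smul, ← add_assoc]; exact hP0 w hw i
    · rw [sum_weakLdACoeff_some_smul, ← add_assoc, ← add_assoc]; exact hPl w hw l i
  · intro w hw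
    rw [sum_weakLdAWeight_smul, ← add_assoc]; exact hqp w hw
  · intro w hw
    rw [sum_weakLdAWeight_smul, ← add_assoc]; exact hpp w hw

theorem weak_LdA_RK_is_variational_integrator
    {N m s : ℕ} (hN : 1 ≤ N) (hm : 1 ≤ m) (hs : 1 ≤ s)
    (Δt : ℝ) (Ihat : Fin m → ℝ)
    (H : E N × E N → ℝ) (h : Fin m → E N × E N → ℝ)
    (hH : ContDiff ℝ 2 H) (hh : ∀ r, ContDiff ℝ 2 (h r))
    (F : E N × E N → E N) (f : Fin m → E N × E N → E N)
    (hF : ContDiff ℝ 1 F) (hf : ∀ r, ContDiff ℝ 1 (f r))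
    (a0 a1 b0 b1 b3 : Fin s → Fin s → ℝ) (α β : Fin s → ℝ)
    (hc1 : ∀ i j, α i * a0 i j + α j * a0 j i = α i * α j)
    (hc2 : ∀ i j, α i * b0 i j + β j * a1 j i = α i * β j)
    (hc3 : ∀ i j, β i * b1 i j + β j * b1 j i = β i * β j)
    (hc4 : ∀ i j, β i * b3 i j + β j * b3 j i = β i * β j)
    (U : Set (E N × E N)) (hU : IsOpen U)
    (Q0 P0 : Fin s → E N × E N → E N)
    (Qr Pr : Fin m → Fin s → E N × E N → E N)
    (qplus pminus : E N × E N → E N)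
    (hQ0diff : ∀ i, ∀ z ∈ U, DifferentiableAt ℝ (Q0 i) z)
    (hP0diff : ∀ i, ∀ z ∈ U, DifferentiableAt ℝ (P0 i) z)
    (hQrdiff : ∀ l i, ∀ z ∈ U, DifferentiableAt ℝ (Qr l i) z)
    (hPrdiff : ∀ l i, ∀ z ∈ U, DifferentiableAt ℝ (Pr l i) z)
    (hqdiff : ∀ z ∈ U, DifferentiableAt ℝ qplus z)
    (hpdiff : ∀ z ∈ U, DifferentiableAt ℝ pminus z)
    -- the weak Runge–Kutta relations, with q_k = z.1, p_{k+1} = z.2,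
    -- p_k = pminus z, q_{k+1} = qplus z:
    (hQ0 : ∀ z ∈ U, ∀ i, Q0 i z = z.1
        + Δt • ∑ j, a0 i j • D2 H (Q0 j z) (P0 j z)
        + ∑ r, Ihat r • ∑ j, b0 i j • D2 (h r) (Qr r j z) (Pr r j z))
    (hP0 : ∀ z ∈ U, ∀ i, P0 i z = pminus z
        + Δt • ∑ j, a0 i j • (-D1 H (Q0 j z) (P0 j z) + F (Q0 j z, P0 j z))
        + ∑ r, Ihat r • ∑ j, b0 i j •
            (-D1 (h r) (Qr r j z) (Pr r j z) + f r (Qr r j z, Pr r j z)))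
    (hQl : ∀ z ∈ U, ∀ l i, Qr l i z = z.1
        + Δt • ∑ j, a1 i j • D2 H (Q0 j z) (P0 j z)
        + Ihat l • ∑ j, b1 i j • D2 (h l) (Qr l j z) (Pr l j z)
        + ∑ r ∈ Finset.univ.erase l, Ihat r • ∑ j, b3 i j • D2 (h r) (Qr r j z) (Pr r j z))
    (hPl : ∀ z ∈ U, ∀ l i, Pr l i z = pminus z
        + Δt • ∑ j, a1 i j • (-D1 H (Q0 j z) (P0 j z) + F (Q0 j z, P0 j z))
        + Ihat l • ∑ j, b1 i j •
            (-D1 (h l) (Qr l j z) (Pr l j z) + f l (Qr l j z, Pr l j z))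
        + ∑ r ∈ Finset.univ.erase l, Ihat r • ∑ j, b3 i j •
            (-D1 (h r) (Qr r j z) (Pr r j z) + f r (Qr r j z, Pr r j z)))
    (hqp : ∀ z ∈ U, qplus z = z.1
        + Δt • ∑ i, α i • D2 H (Q0 i z) (P0 i z)
        + ∑ r, Ihat r • ∑ i, β i • D2 (h r) (Qr r i z) (Pr r i z))
    (hpp : ∀ z ∈ U, z.2 = pminus z
        + Δt • ∑ i, α i • (-D1 H (Q0 i z) (P0 i z) + F (Q0 i z, P0 i z))
        + ∑ r, Ihat r • ∑ i, β i •
            (-D1 (h r) (Qr r i z) (Pr r i z) + f r (Qr r i z, Pr r i z)))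
    -- the discrete Hamiltonian:
    (Hd : E N × E N → ℝ)
    (hHd : ∀ z : E N × E N, Hd z = (inner ℝ z.2 (qplus z) : ℝ)
        - Δt * ∑ i, α i *
            ((inner ℝ (P0 i z) (D2 H (Q0 i z) (P0 i z)) : ℝ) - H (Q0 i z, P0 i z))
        - ∑ r, Ihat r * ∑ i, β i *
            ((inner ℝ (Pr r i z) (D2 (h r) (Qr r i z) (Pr r i z)) : ℝ)
              - h r (Qr r i z, Pr r i z)))
    -- the discrete forces:
    (Fminus Fplus : E N × E N → E N)
    (hFm : ∀ z : E N × E N, Fminus z =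
        Δt • ∑ i, α i •
          (ContinuousLinearMap.adjoint (fderiv ℝ (fun x' => Q0 i (x', z.2)) z.1))
            (F (Q0 i z, P0 i z))
        + ∑ r, Ihat r • ∑ i, β i •
          (ContinuousLinearMap.adjoint (fderiv ℝ (fun x' => Qr r i (x', z.2)) z.1))
            (f r (Qr r i z, Pr r i z)))
    (hFp : ∀ z : E N × E N, Fplus z =
        Δt • ∑ i, α i •
          (ContinuousLinearMap.adjoint (fderiv ℝ (fun y' => Q0 i (z.1, y')) z.2))
            (F (Q0 i z, P0 i z))
        + ∑ r, Ihat r • ∑ i, β i •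
          (ContinuousLinearMap.adjoint (fderiv ℝ (fun y' => Qr r i (z.1, y')) z.2))
            (f r (Qr r i z, Pr r i z))) :
    ∀ z ∈ U, D2 Hd z.1 z.2 = qplus z + Fplus z ∧ D1 Hd z.1 z.2 = pminus z + Fminus z :=
  weak_LdA_RK_is_variational_integrator_general Δt Ihat H h hH hh F f a0 a1 b0 b1 b3 α β hc1 hc2 hc3
    hc4 U hU Q0 P0 Qr Pr qplus pminus hQ0diff hP0diff hQrdiff hPrdiff hqdiff hQ0 hP0 hQl hPl hqp hpp
    Hd hHd Fminus Fplus hFm hFp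
end
end

section
/- Fix N ≥ 1. Let H⁺_d : ℝ^N × ℝ^N → ℝ be differentiable, F⁻_d, F⁺_d : ℝ^N × ℝ^N → ℝ^N arbitrary maps, and let ξ_Q : ℝ^N → ℝ^N and ξᵖ : ℝ^N × ℝ^N → ℝ^N be given. Assume infinitesimal invariance of the generalized discrete Lagrangian R_d(q, q', p') = p'·q' − H⁺_d(q, p'): for all q, q', p' ∈ ℝ^N, −D₁H⁺_d(q, p')·ξ_Q(q) + p'·ξ_Q(q') + ( q' − D₂H⁺_d(q, p') )·ξᵖ(q', p') = 0. Assume also the orthogonality condition F⁻_d(q, p')·ξ_Q(q) + F⁺_d(q, p')·ξᵖ(q', p') = 0 for all q, q', p' ∈ ℝ^N. Then whenever (q_k, p_k, q_{k+1}, p_{k+1}) satisfy the discrete equations q_{k+1} = D₂H⁺_d(q_k, p_{k+1}) − F⁺_d(q_k, p_{k+1}) and p_k = D₁H⁺_d(q_k, p_{k+1}) − F⁻_d(q_k, p_{k+1}), the momentum map is conserved: p_{k+1}·ξ_Q(q_{k+1}) = p_k·ξ_Q(q_k). (Discrete Noether's theorem for stochastic systems with forcing, Theorem 3.3, in infinitesimal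 form.) -/
noncomputable section
open scoped BigOperators

open scoped RealInnerProductSpace in
/-- Read `a, b` as `D₁H⁺_d, D₂H⁺_d`, `x, x', y` as `ξ_Q(q), ξ_Q(q'), ξᵖ(q', p')` and
`fm, fp` as the forces `F⁻_d, F⁺_d` at `(q, p')`: along a forced discrete step, the
change of the momentum map is the virtual work of the forces along the generator. -/
theorem momentum_change_eq_forcing_work {V : Type*} [NormedAddCommGroup V]
    [InnerProductSpace ℝ V] {a b fm fp p p' q' x x' y : V}
    (hinv : -⟪a, x⟫ + ⟪p', x'⟫ + ⟪q' - b, y⟫ = 0)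
    (hq : q' = b - fp) (hp : p = a - fm) :
    ⟪p', x'⟫ - ⟪p, x⟫ = ⟪fm, x⟫ + ⟪fp, y⟫ := by
  subst hq hp
  rw [sub_sub_cancel_left, inner_neg_left] at hinv
  rw [inner_sub_left]
  linarith

theorem discrete_noether_forced_general
    {N : ℕ}
    (Hd : E N × E N → ℝ)
    (Fminus Fplus : E N × E N → E N)
    (ξQ : E N → E N) (ξP : E N × E N → E N)
    -- infinitesimal invariance of R_d(q, q', p') = p'·q' − H⁺_d(q, p'):
    (hinv : ∀ q q' p' : E N,
      -(inner ℝ (D1 Hd q p') (ξQ q) : ℝ) + (inner ℝ p' (ξQ q') : ℝ)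
        + (inner ℝ (q' - D2 Hd q p') (ξP (q', p')) : ℝ) = 0)
    -- orthogonality condition on the discrete forces:
    (horth : ∀ q q' p' : E N,
      (inner ℝ (Fminus (q, p')) (ξQ q) : ℝ) + (inner ℝ (Fplus (q, p')) (ξP (q', p')) : ℝ) = 0)
    (qk pk qk1 pk1 : E N)
    (heq1 : qk1 = D2 Hd qk pk1 - Fplus (qk, pk1))
    (heq2 : pk = D1 Hd qk pk1 - Fminus (qk, pk1)) :
    (inner ℝ pk1 (ξQ qk1) : ℝ) = (inner ℝ pk (ξQ qk) : ℝ) := by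
  have hwork := momentum_change_eq_forcing_work (hinv qk qk1 pk1) heq1 heq2
  linarith [horth qk qk1 pk1]

theorem discrete_noether_forced
    {N : ℕ} (hN : 1 ≤ N)
    (Hd : E N × E N → ℝ) (hHd : Differentiable ℝ Hd)
    (Fminus Fplus : E N × E N → E N)
    (ξQ : E N → E N) (ξP : E N × E N → E N)
    -- infinitesimal invariance of R_d(q, q', p') = p'·q' − H⁺_d(q, p'):
    (hinv : ∀ q q' p' : E N,
      -(inner ℝ (D1 Hd q p') (ξQ q) : ℝ) + (inner ℝ p' (ξQ q') : ℝ)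
        + (inner ℝ (q' - D2 Hd q p') (ξP (q', p')) : ℝ) = 0)
    -- orthogonality condition on the discrete forces:
    (horth : ∀ q q' p' : E N,
      (inner ℝ (Fminus (q, p')) (ξQ q) : ℝ) + (inner ℝ (Fplus (q, p')) (ξP (q', p')) : ℝ) = 0)
    (qk pk qk1 pk1 : E N)
    (heq1 : qk1 = D2 Hd qk pk1 - Fplus (qk, pk1))
    (heq2 : pk = D1 Hd qk pk1 - Fminus (qk, pk1)) :
    (inner ℝ pk1 (ξQ qk1) : ℝ) = (inner ℝ pk (ξQ qk) : ℝ) :=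
  discrete_noether_forced_general Hd Fminus Fplus ξQ ξP hinv horth qk pk qk1 pk1 heq1 heq2
end
end

section
/- Fix N ≥ 1. Let H⁺_d : ℝ^N × ℝ^N → ℝ be differentiable, F⁻_d, F⁺_d : ℝ^N × ℝ^N → ℝ^N arbitrary maps, and let ξ_Q : ℝ^N → ℝ^N and ξᵖ : ℝ^N × ℝ^N → ℝ^N be given. Assume infinitesimal invariance of the generalized discrete Lagrangian R_d(q, q', p') = p'·q' − H⁺_d(q, p'): for all q, q', p' ∈ ℝ^N, −D₁H⁺_d(q, p')·ξ_Q(q) + p'·ξ_Q(q') + ( q' − D₂H⁺_d(q, p') )·ξᵖ(q', p') = 0. Then whenever (q_k, p_k, q_{k+1}, p_{k+1}) satisfy the discrete equations q_{k+1} = D₂H⁺_d(q_k, p_{k+1}) − F⁺_d(q_k, p_{k+1}) and p_k = D₁H⁺_d(q_k, p_{k+1}) − F⁻_d(q_k, p_{k+1}), the momentum map changes according to p_{k+1}·ξ_Q(q_{k+1}) − p_k·ξ_Q(q_k) = F⁻_d(q_k, p_{k+1})·ξ_Q(q_k) + F⁺_d(q_k, p_{k+1})·ξᵖ(q_{k+1},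 p_{k+1}). (The discrete evolution formula for the momentum map established in the proof of Theorem 3.3 and stated in the remark following it.) -/
noncomputable section
open scoped BigOperators

theorem inner_sub_inner_eq_of_invariance {V : Type*} [NormedAddCommGroup V]
    [InnerProductSpace ℝ V] (g₁ g₂ p p' q' f₁ f₂ v v' w : V)
    (hinv : -(inner ℝ g₁ v : ℝ) + inner ℝ p' v' + inner ℝ (q' - g₂) w = 0)
    (hq' : q' = g₂ - f₂) (hp : p = g₁ - f₁) :
    (inner ℝ p' v' : ℝ) - inner ℝ p v = inner ℝ f₁ v + inner ℝ f₂ w := by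
  have hforce : q' - g₂ = -f₂ := by rw [hq']; abel
  rw [hforce, inner_neg_left] at hinv
  rw [hp, inner_sub_left]
  linarith

theorem discrete_momentum_map_evolution_general
    {N : ℕ}
    (Hd : E N × E N → ℝ)
    (Fminus Fplus : E N × E N → E N)
    (ξQ : E N → E N) (ξP : E N × E N → E N)
    -- infinitesimal invariance of R_d(q, q', p') = p'·q' − H⁺_d(q, p'):
    (hinv : ∀ q q' p' : E N,
      -(inner ℝ (D1 Hd q p') (ξQ q) : ℝ) + (inner ℝ p' (ξQ q') : ℝ)
        + (inner ℝ (q' - D2 Hd q p') (ξP (q', p')) : ℝ) = 0)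
    (qk pk qk1 pk1 : E N)
    (heq1 : qk1 = D2 Hd qk pk1 - Fplus (qk, pk1))
    (heq2 : pk = D1 Hd qk pk1 - Fminus (qk, pk1)) :
    (inner ℝ pk1 (ξQ qk1) : ℝ) - (inner ℝ pk (ξQ qk) : ℝ)
      = (inner ℝ (Fminus (qk, pk1)) (ξQ qk) : ℝ)
        + (inner ℝ (Fplus (qk, pk1)) (ξP (qk1, pk1)) : ℝ) :=
  inner_sub_inner_eq_of_invariance _ _ _ _ _ _ _ _ _ _ (hinv qk qk1 pk1) heq1 heq2

theorem discrete_momentum_map_evolution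
    {N : ℕ} (hN : 1 ≤ N)
    (Hd : E N × E N → ℝ) (hHd : Differentiable ℝ Hd)
    (Fminus Fplus : E N × E N → E N)
    (ξQ : E N → E N) (ξP : E N × E N → E N)
    -- infinitesimal invariance of R_d(q, q', p') = p'·q' − H⁺_d(q, p'):
    (hinv : ∀ q q' p' : E N,
      -(inner ℝ (D1 Hd q p') (ξQ q) : ℝ) + (inner ℝ p' (ξQ q') : ℝ)
        + (inner ℝ (q' - D2 Hd q p') (ξP (q', p')) : ℝ) = 0)
    (qk pk qk1 pk1 : E N)
    (heq1 : qk1 = D2 Hd qk pk1 - Fplus (qk, pk1))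
    (heq2 : pk = D1 Hd qk pk1 - Fminus (qk, pk1)) :
    (inner ℝ pk1 (ξQ qk1) : ℝ) - (inner ℝ pk (ξQ qk) : ℝ)
      = (inner ℝ (Fminus (qk, pk1)) (ξQ qk) : ℝ)
        + (inner ℝ (Fplus (qk, pk1)) (ξP (qk1, pk1)) : ℝ) :=
  discrete_momentum_map_evolution_general Hd Fminus Fplus ξQ ξP hinv qk pk qk1 pk1 heq1 heq2
end
end

section
/- Let N ≥ 1 and let A, B, C, γ be real N × N matrices such that η := I − ½γ is invertible. Then the determinant of the 2N × 2N block matrix with N × N blocks [ I − ½Aη⁻¹B , Aη⁻¹ ; −½(I + γη⁻¹)B − ½C + ¼CAη⁻¹B , I − ½CAη⁻¹ + γη⁻¹ ] equals det( I + γη⁻¹ ). -/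
/- STATEMENT 6: The block-determinant identity in the proof of Theorem 3.4. -/

noncomputable section
open scoped BigOperators

theorem block_determinant_identity
    {N : ℕ} (hN : 1 ≤ N)
    (A B C γ η : Matrix (Fin N) (Fin N) ℝ)
    (hη : η = 1 - (1 / 2 : ℝ) • γ)
    (hunit : IsUnit η) :
    (Matrix.fromBlocks
        (1 - (1 / 2 : ℝ) • (A * η⁻¹ * B))
        (A * η⁻¹)
        (-((1 / 2 : ℝ) • ((1 + γ * η⁻¹) * B)) - (1 / 2 : ℝ) • C
          + (1 / 4 : ℝ) • (C * A * η⁻¹ * B))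
        (1 - (1 / 2 : ℝ) • (C * A * η⁻¹) + γ * η⁻¹)).det
      = (1 + γ * η⁻¹).det := by
  set X := A * η⁻¹ with hX
  have hfact :
      (Matrix.fromBlocks
        (1 - (1 / 2 : ℝ) • (A * η⁻¹ * B))
        (A * η⁻¹)
        (-((1 / 2 : ℝ) • ((1 + γ * η⁻¹) * B)) - (1 / 2 : ℝ) • C
          + (1 / 4 : ℝ) • (C * A * η⁻¹ * B))
        (1 - (1 / 2 : ℝ) • (C * A * η⁻¹) + γ * η⁻¹))
      = (Matrix.fromBlocks 1 X (-((1 / 2 : ℝ) • C))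
            (1 - (1 / 2 : ℝ) • (C * X) + γ * η⁻¹))
        * (Matrix.fromBlocks 1 0 (-((1 / 2 : ℝ) • B)) 1) := by
    rw [Matrix.fromBlocks_multiply, ← Matrix.fromBlocks_inj.symm]
    refine ⟨?_, ?_, ?_, ?_⟩
    · simp [hX, Matrix.mul_smul, mul_assoc, sub_eq_add_neg]
    · simp [hX]
    · simp only [hX, Matrix.mul_one, Matrix.one_mul, Matrix.add_mul, Matrix.sub_mul,
        Matrix.mul_neg, Matrix.neg_mul, Matrix.smul_mul, Matrix.mul_smul, smul_smul,
        mul_assoc]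
      norm_num
      module
    · simp [hX, mul_assoc]
  rw [hfact, Matrix.det_mul, Matrix.det_fromBlocks_zero₁₂, Matrix.det_one, one_mul,
    mul_one, Matrix.det_fromBlocks_one₁₁]
  congr 1
  simp [Matrix.neg_mul, Matrix.smul_mul]
  abel
end
end

section
/- Fix N ≥ 1, m ≥ 1 and real numbers t₀ < T. Let H, h₁,…,h_m : ℝ^N × ℝ^N → ℝ be C², let Γ₀,…,Γ_m be real N × N matrices, and define the vector fields X(q,p) = ( ∇_pH(q,p), −∇_qH(q,p) − Γ₀p ) and Y_i(q,p) = ( ∇_ph_i(q,p), −∇_qh_i(q,p) − Γ_i p ) for i = 1,…,m. Let w : ℝ → ℝ^m be C¹ and let φ : [t₀,T] × (ℝ^N × ℝ^N) → ℝ^N × ℝ^N be C² with φ(t₀, z) = z for all z and ∂_tφ(t,z) = X(φ(t,z)) + Σ_{i=1}^m (wⁱ)'(t) Y_i(φ(t,z)) for all (t,z). Then for all t ∈ [t₀,T] and all z ∈ ℝ^N × ℝ^N: det D_zφ(t,z) = exp( −tr Γ₀ · (t − t₀) − Σ_{i=1}^m tr Γ_i · ( wⁱ(t) − wⁱ(t₀)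 ) ). (Smooth-noise, pathwise version of Theorem 2.4: the phase-space volume form evolves under the flow of the stochastic forced Hamiltonian system with forcing F = −Γ₀p, f_i = −Γ_i p by the factor b_{t,t₀} = exp(−tr Γ₀ (t−t₀) − Σ_i tr Γ_i (wⁱ(t)−wⁱ(t₀))).) -/
noncomputable section
open scoped BigOperators

/-!
Liouville's formula. Write `G s = X + ∑ i, (wⁱ)'(s) • Yᵢ`. Because the mixed second derivatives of
`φ` commute, `J s = D_zφ(s, z)` solves the variational equation `J' = D G s (φ s z) ∘ J`, so by
Jacobi's formula `(det J)' = tr (D G s) · det J`. In each field the Hamiltonian part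
`(∇ₚK, -∇_qK)` is divergence free, by the symmetry of the Hessian of `K`, while the damping `-Γ p`
contributes `-tr Γ`. Hence `tr (D G s) = -tr Γ₀ - ∑ i, (wⁱ)'(s) tr Γᵢ` does not depend on the
point, and integrating from `det J t₀ = 1` gives the exponential.
-/

theorem LinearMap.trace_prod_eq_add {R M N : Type*} [CommRing R] [AddCommGroup M] [Module R M]
    [Module.Free R M] [Module.Finite R M] [AddCommGroup N] [Module R N] [Module.Free R N]
    [Module.Finite R N] (f : M × N →ₗ[R] M × N) :
    trace R (M × N) f = trace R M (fst R M N ∘ₗ f ∘ₗ inl R M N)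
      + trace R N (snd R M N ∘ₗ f ∘ₗ inr R M N) := by
  classical
  let b := Module.Free.chooseBasis R M
  let b' := Module.Free.chooseBasis R N
  simp [trace_eq_matrix_trace R (b.prod b'), trace_eq_matrix_trace R b,
    trace_eq_matrix_trace R b', Matrix.trace, Fintype.sum_sum_type, toMatrix_apply]

theorem Matrix.adjugate_mul_apply_self_eq_sum_perm {R n : Type*} [CommRing R] [Fintype n]
    [DecidableEq n] (A B : Matrix n n R) (j : n) :
    (A.adjugate * B) j j = ∑ σ : Equiv.Perm n, (Equiv.Perm.sign σ : R) *
        ((∏ i ∈ Finset.univ.erase j, A (σ i) i) * B (σ j) j) := by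
  have hcramer : (A.adjugate * B) j j = (A.updateCol j fun r => B r j).det := by
    rw [← Matrix.cramer_apply, Matrix.cramer_eq_adjugate_mulVec]
    rfl
  rw [hcramer, Matrix.det_apply']
  refine Finset.sum_congr rfl fun σ _ => ?_
  rw [← Finset.prod_erase_mul _ _ (Finset.mem_univ j)]
  congr 2
  · exact Finset.prod_congr rfl fun i hi => by simp [Finset.ne_of_mem_erase hi]
  · simp

theorem Matrix.hasDerivAt_det {𝕜 n : Type*} [NontriviallyNormedField 𝕜] [Fintype n]
    [DecidableEq n] {M : 𝕜 → Matrix n n 𝕜} {M' : Matrix n n 𝕜} {t : 𝕜}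
    (hM : ∀ i j, HasDerivAt (fun s => M s i j) (M' i j) t) :
    HasDerivAt (fun s => (M s).det) ((M t).adjugate * M').trace t := by
  have hexp : HasDerivAt (fun s => (M s).det)
      (∑ σ : Equiv.Perm n, (Equiv.Perm.sign σ : 𝕜) *
        ∑ j, (∏ i ∈ Finset.univ.erase j, M t (σ i) i) • M' (σ j) j) t := by
    simp only [Matrix.det_apply']
    exact HasDerivAt.fun_sum fun σ _ =>
      (HasDerivAt.fun_finsetProd fun i _ => hM (σ i) i).const_mul _
  convert hexp using 1
  simp only [Matrix.trace, Matrix.diag, Matrix.adjugate_mul_apply_self_eq_sum_perm, smul_eq_mul,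
    Finset.mul_sum]
  exact Finset.sum_comm

theorem Matrix.trace_adjugate_mul_mul_self {R n : Type*} [CommRing R] [Fintype n] [DecidableEq n]
    (A C : Matrix n n R) : (A.adjugate * (C * A)).trace = C.trace * A.det := by
  rw [← Matrix.mul_assoc, Matrix.trace_mul_comm, ← Matrix.mul_assoc, Matrix.mul_adjugate,
    Matrix.smul_mul, one_mul, Matrix.trace_smul, smul_eq_mul, mul_comm]

theorem ContinuousLinearMap.hasDerivAt_det_of_hasDerivAt_eq_comp {𝕜 V : Type*}
    [NontriviallyNormedField 𝕜] [CompleteSpace 𝕜] [NormedAddCommGroup V] [NormedSpace 𝕜 V]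
    [FiniteDimensional 𝕜 V] {L : 𝕜 → V →L[𝕜] V} {A : V →L[𝕜] V} {t : 𝕜}
    (hL : HasDerivAt L (A.comp (L t)) t) :
    HasDerivAt (fun s => LinearMap.det (L s : V →ₗ[𝕜] V))
      (LinearMap.trace 𝕜 V A * LinearMap.det (L t : V →ₗ[𝕜] V)) t := by
  classical
  let b := Module.finBasis 𝕜 V
  have hentry : ∀ i j, HasDerivAt (fun s => LinearMap.toMatrix b b (L s) i j)
      (LinearMap.toMatrix b b (A.comp (L t)) i j) t := fun i j => by
    simpa [LinearMap.toMatrix_apply, Function.comp_def] using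
      ((LinearMap.toContinuousLinearMap (b.coord i)).comp
        (ContinuousLinearMap.apply 𝕜 V (b j))).hasFDerivAt.comp_hasDerivAt t hL
  have hdet := Matrix.hasDerivAt_det hentry
  rw [ContinuousLinearMap.toLinearMap_comp, LinearMap.toMatrix_comp b b b,
    Matrix.trace_adjugate_mul_mul_self, ← LinearMap.trace_eq_matrix_trace, LinearMap.det_toMatrix]
    at hdet
  simpa only [LinearMap.det_toMatrix] using hdet

theorem trace_fderiv_add_sum_smul {𝕜 V ι : Type*} [NontriviallyNormedField 𝕜]
    [NormedAddCommGroup V] [NormedSpace 𝕜 V] [Fintype ι] {X : V → V} {Y : ι → V → V} {z : V}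
    (hX : DifferentiableAt 𝕜 X z) (hY : ∀ i, DifferentiableAt 𝕜 (Y i) z) (c : ι → 𝕜) :
    LinearMap.trace 𝕜 V (fderiv 𝕜 (fun x => X x + ∑ i, c i • Y i x) z)
      = LinearMap.trace 𝕜 V (fderiv 𝕜 X z) + ∑ i, c i * LinearMap.trace 𝕜 V (fderiv 𝕜 (Y i) z) := by
  have hD : HasFDerivAt (fun x => X x + ∑ i, c i • Y i x)
      (fderiv 𝕜 X z + ∑ i, c i • fderiv 𝕜 (Y i) z) z :=
    hX.hasFDerivAt.add (HasFDerivAt.fun_sum fun i _ => (hY i).hasFDerivAt.const_smul (c i))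
  rw [hD.fderiv]
  simp

theorem hasDerivAt_fderiv_of_hasDerivAt_flow {U V : Type*} [NormedAddCommGroup U]
    [NormedSpace ℝ U] [NormedAddCommGroup V] [NormedSpace ℝ V] {φ : ℝ → U → V}
    (hφ : ContDiff ℝ 2 (fun p : ℝ × U => φ p.1 p.2)) {G : V → V} {t : ℝ}
    (hflow : ∀ z, HasDerivAt (fun s => φ s z) (G (φ t z)) t) {z : U}
    (hG : DifferentiableAt ℝ G (φ t z)) :
    HasDerivAt (fun s => fderiv ℝ (φ s) z) ((fderiv ℝ G (φ t z)).comp (fderiv ℝ (φ t) z)) t := by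
  set Φ : ℝ × U → V := fun p => φ p.1 p.2
  have hΦ : Differentiable ℝ Φ := hφ.differentiable (by norm_num)
  have hDΦ : Differentiable ℝ (fderiv ℝ Φ) :=
    (hφ.fderiv_right (m := 1) le_rfl).differentiable (by norm_num)
  have hslice : ∀ s z', HasFDerivAt (φ s) ((fderiv ℝ Φ (s, z')).comp (.inr ℝ ℝ U)) z' :=
    fun s z' => (hΦ (s, z')).hasFDerivAt.comp z' (hasFDerivAt_prodMk_right s z')
  have htime : ∀ s z', HasDerivAt (fun s => (s, z')) ((1 : ℝ), (0 : U)) s :=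
    fun s z' => (hasDerivAt_id s).prodMk (hasDerivAt_const s z')
  have hvel : (fun z' => fderiv ℝ Φ (t, z') (1, 0)) = G ∘ φ t := funext fun z' => by
    have hcurve := (hΦ (t, z')).hasFDerivAt.comp_hasDerivAt t (htime t z')
    exact hcurve.unique (hflow z')
  have hD : HasDerivAt (fun s => fderiv ℝ (φ s) z)
      ((fderiv ℝ (fderiv ℝ Φ) (t, z) (1, 0)).comp (.inr ℝ ℝ U)) t := by
    simp only [fun s => (hslice s z).fderiv]
    exact ((ContinuousLinearMap.compL ℝ U (ℝ × U) V).flip (.inr ℝ ℝ U)).hasFDerivAt.comp_hasDerivAt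
      t ((hDΦ (t, z)).hasFDerivAt.comp_hasDerivAt t (htime t z))
  have hmixed_flow : HasFDerivAt (fun z' => fderiv ℝ Φ (t, z') (1, 0))
      ((fderiv ℝ G (φ t z)).comp (fderiv ℝ (φ t) z)) z := by
    rw [hvel]
    exact hG.hasFDerivAt.comp z (hslice t z).differentiableAt.hasFDerivAt
  have hmixed_hess := ((hDΦ (t, z)).hasFDerivAt.comp z (hasFDerivAt_prodMk_right t z)).clm_apply
    (hasFDerivAt_const ((1 : ℝ), (0 : U)) z)
  convert hD using 1
  ext v
  rw [hmixed_flow.unique hmixed_hess]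
  simpa using (hφ.contDiffAt.isSymmSndFDerivAt (by simp) ((0 : ℝ), v) ((1 : ℝ), (0 : U)))

theorem eq_exp_sub_mul_of_hasDerivAt_mul {f g g' : ℝ → ℝ} {a b : ℝ}
    (hf : ∀ s ∈ Set.Icc a b, HasDerivAt f (g' s * f s) s)
    (hg : ∀ s ∈ Set.Icc a b, HasDerivAt g (g' s) s) :
    ∀ t ∈ Set.Icc a b, f t = Real.exp (g t - g a) * f a := by
  have hconst : ∀ s ∈ Set.Icc a b, HasDerivAt (fun s => Real.exp (-g s) * f s) 0 s := by
    intro s hs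
    exact (hg s hs).fun_neg.exp.fun_mul (hf s hs) |>.congr_deriv (by ring)
  intro t ht
  have hta := constant_of_has_deriv_right_zero
    (fun s hs => (hconst s hs).continuousAt.continuousWithinAt)
    (fun s hs => (hconst s (Set.Ico_subset_Icc_self hs)).hasDerivWithinAt) t ht
  rw [sub_eq_add_neg, Real.exp_add, mul_assoc, ← hta, ← mul_assoc, ← Real.exp_add,
    add_neg_cancel, Real.exp_zero, one_mul]

section gradientComp

variable {F G : Type*} [NormedAddCommGroup F] [InnerProductSpace ℝ F] [CompleteSpace F]
  [NormedAddCommGroup G] [NormedSpace ℝ G]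

def gradientComp (j : F →L[ℝ] G) : (G →L[ℝ] ℝ) →L[ℝ] F :=
  ((InnerProductSpace.toDual ℝ F).symm.toContinuousLinearEquiv.toContinuousLinearMap :
    StrongDual ℝ F →L[ℝ] F).comp
    ((ContinuousLinearMap.compL ℝ F G ℝ).flip j)

@[simp]
theorem inner_gradientComp (j : F →L[ℝ] G) (L : G →L[ℝ] ℝ) (u : F) :
    inner ℝ u (gradientComp j L) = L (j u) := by
  rw [real_inner_comm]
  exact InnerProductSpace.toDual_symm_apply

end gradientComp

section Hamiltonian

variable {N : ℕ}

theorem D1_eq_gradientComp {K : E N × E N → ℝ} {x y : E N} (hK : DifferentiableAt ℝ K (x, y)) :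
    D1 K x y = gradientComp (.inl ℝ (E N) (E N)) (fderiv ℝ K (x, y)) := by
  have hslice : HasFDerivAt (fun x' => K (x', y)) _ x :=
    hK.hasFDerivAt.comp x (hasFDerivAt_prodMk_left x y)
  rw [D1, gradient, hslice.fderiv]
  rfl

theorem D2_eq_gradientComp {K : E N × E N → ℝ} {x y : E N} (hK : DifferentiableAt ℝ K (x, y)) :
    D2 K x y = gradientComp (.inr ℝ (E N) (E N)) (fderiv ℝ K (x, y)) := by
  have hslice : HasFDerivAt (fun y' => K (x, y')) _ y :=
    hK.hasFDerivAt.comp y (hasFDerivAt_prodMk_right x y)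
  rw [D2, gradient, hslice.fderiv]
  rfl

def dampedHamiltonianField (K : E N × E N → ℝ) (Γ : E N →L[ℝ] E N) (z : E N × E N) :
    E N × E N :=
  (D2 K z.1 z.2, -D1 K z.1 z.2 - Γ z.2)

theorem hasFDerivAt_dampedHamiltonianField {K : E N × E N → ℝ} (hK : ContDiff ℝ 2 K)
    (Γ : E N →L[ℝ] E N) (z : E N × E N) :
    HasFDerivAt (dampedHamiltonianField K Γ)
      (((gradientComp (.inr ℝ (E N) (E N))).comp (fderiv ℝ (fderiv ℝ K) z)).prod
        (-(gradientComp (.inl ℝ (E N) (E N))).comp (fderiv ℝ (fderiv ℝ K) z)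
          - Γ.comp (.snd ℝ (E N) (E N)))) z := by
  have hK1 : Differentiable ℝ K := hK.differentiable (by norm_num)
  have hDK : HasFDerivAt (fderiv ℝ K) (fderiv ℝ (fderiv ℝ K) z) z :=
    ((hK.fderiv_right (m := 1) le_rfl).differentiable (by norm_num) z).hasFDerivAt
  have hfield : dampedHamiltonianField K Γ = fun z =>
      (gradientComp (.inr ℝ (E N) (E N)) (fderiv ℝ K z),
        -gradientComp (.inl ℝ (E N) (E N)) (fderiv ℝ K z) - Γ z.2) := by
    funext z
    rw [dampedHamiltonianField, D1_eq_gradientComp (hK1 _), D2_eq_gradientComp (hK1 _)]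
  rw [hfield]
  exact ((gradientComp _).hasFDerivAt.comp z hDK).prodMk
    (((gradientComp _).hasFDerivAt.comp z hDK).neg.sub (Γ.comp (.snd ℝ (E N) (E N))).hasFDerivAt)

theorem differentiable_dampedHamiltonianField {K : E N × E N → ℝ} (hK : ContDiff ℝ 2 K)
    (Γ : E N →L[ℝ] E N) : Differentiable ℝ (dampedHamiltonianField K Γ) := fun z =>
  (hasFDerivAt_dampedHamiltonianField hK Γ z).differentiableAt

theorem trace_fderiv_dampedHamiltonianField {K : E N × E N → ℝ} (hK : ContDiff ℝ 2 K)
    (Γ : E N →L[ℝ] E N) (z : E N × E N) :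
    LinearMap.trace ℝ (E N × E N) (fderiv ℝ (dampedHamiltonianField K Γ) z)
      = -LinearMap.trace ℝ (E N) Γ := by
  let b := EuclideanSpace.basisFun (Fin N) ℝ
  have hsymm : ∀ i, fderiv ℝ (fderiv ℝ K) z (0, b i) (b i, 0)
      = fderiv ℝ (fderiv ℝ K) z (b i, 0) (0, b i) := fun i =>
    hK.contDiffAt.isSymmSndFDerivAt (by simp) _ _
  rw [(hasFDerivAt_dampedHamiltonianField hK Γ z).fderiv, LinearMap.trace_prod_eq_add,
    LinearMap.trace_eq_sum_inner _ b, LinearMap.trace_eq_sum_inner _ b,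
    LinearMap.trace_eq_sum_inner _ b]
  simp [inner_sub_right, hsymm, Finset.sum_sub_distrib, ← add_sub_assoc]

def drivenHamiltonianField {ι : Type*} [Fintype ι] (H : E N × E N → ℝ) (h : ι → E N × E N → ℝ)
    (Γ0 : E N →L[ℝ] E N) (Γ : ι → E N →L[ℝ] E N) (c : ι → ℝ) : E N × E N → E N × E N :=
  fun z => dampedHamiltonianField H Γ0 z + ∑ i, c i • dampedHamiltonianField (h i) (Γ i) z

section drivenHamiltonianField

variable {ι : Type*} [Fintype ι] {H : E N × E N → ℝ} {h : ι → E N × E N → ℝ}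

theorem differentiable_drivenHamiltonianField (hH : ContDiff ℝ 2 H) (hh : ∀ i, ContDiff ℝ 2 (h i))
    (Γ0 : E N →L[ℝ] E N) (Γ : ι → E N →L[ℝ] E N) (c : ι → ℝ) :
    Differentiable ℝ (drivenHamiltonianField H h Γ0 Γ c) := by
  have hX := differentiable_dampedHamiltonianField hH Γ0
  have hY := fun i => differentiable_dampedHamiltonianField (hh i) (Γ i)
  unfold drivenHamiltonianField
  fun_prop

theorem trace_fderiv_drivenHamiltonianField (hH : ContDiff ℝ 2 H) (hh : ∀ i, ContDiff ℝ 2 (h i))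
    (Γ0 : E N →L[ℝ] E N) (Γ : ι → E N →L[ℝ] E N) (c : ι → ℝ) (z : E N × E N) :
    LinearMap.trace ℝ (E N × E N) (fderiv ℝ (drivenHamiltonianField H h Γ0 Γ c) z)
      = -LinearMap.trace ℝ (E N) Γ0 - ∑ i, c i * LinearMap.trace ℝ (E N) (Γ i) := by
  unfold drivenHamiltonianField
  rw [trace_fderiv_add_sum_smul
    (differentiable_dampedHamiltonianField hH Γ0 z)
    (fun i => differentiable_dampedHamiltonianField (hh i) (Γ i) z)]
  simp [trace_fderiv_dampedHamiltonianField, hH, hh, sub_eq_add_neg]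

end drivenHamiltonianField

end Hamiltonian

theorem phase_space_volume_evolution_pathwise_general
    {N m : ℕ}
    {t₀ T : ℝ}
    (H : E N × E N → ℝ) (h : Fin m → E N × E N → ℝ)
    (hH : ContDiff ℝ 2 H) (hh : ∀ i, ContDiff ℝ 2 (h i))
    (Γ0 : E N →L[ℝ] E N) (Γ : Fin m → E N →L[ℝ] E N)
    -- the drift and noise vector fields:
    (X : E N × E N → E N × E N)
    (hX : ∀ z : E N × E N, X z = (D2 H z.1 z.2, -D1 H z.1 z.2 - Γ0 z.2))
    (Y : Fin m → E N × E N → E N × E N)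
    (hY : ∀ i, ∀ z : E N × E N,
      Y i z = (D2 (h i) z.1 z.2, -D1 (h i) z.1 z.2 - Γ i z.2))
    -- the smooth noise path:
    (w : Fin m → ℝ → ℝ) (hw : ∀ i, ContDiff ℝ 1 (w i))
    -- the flow map:
    (φ : ℝ → E N × E N → E N × E N)
    (hφC2 : ContDiff ℝ 2 (fun tz : ℝ × (E N × E N) => φ tz.1 tz.2))
    (hφ0 : ∀ z : E N × E N, φ t₀ z = z)
    (hφ : ∀ z : E N × E N, ∀ t ∈ Set.Icc t₀ T,
        HasDerivAt (fun t' => φ t' z)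
          (X (φ t z) + ∑ i, deriv (w i) t • Y i (φ t z)) t) :
    ∀ t ∈ Set.Icc t₀ T, ∀ z : E N × E N,
      LinearMap.det (fderiv ℝ (φ t) z).toLinearMap
        = Real.exp (-(LinearMap.trace ℝ (E N) Γ0.toLinearMap) * (t - t₀)
            - ∑ i, LinearMap.trace ℝ (E N) (Γ i).toLinearMap * (w i t - w i t₀)) := by
  intro t ht z
  let trΓ0 := LinearMap.trace ℝ (E N) Γ0.toLinearMap
  let trΓ := fun i => LinearMap.trace ℝ (E N) (Γ i).toLinearMap
  let g : ℝ → ℝ := fun s => -trΓ0 * (s - t₀) - ∑ i, trΓ i * (w i s - w i t₀)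
  have hg : ∀ s ∈ Set.Icc t₀ T, HasDerivAt g (-trΓ0 - ∑ i, deriv (w i) s * trΓ i) s := by
    intro s _
    have hwi : ∀ i, HasDerivAt (w i) (deriv (w i) s) s := fun i =>
      ((hw i).differentiable one_ne_zero s).hasDerivAt
    exact ((((hasDerivAt_id s).sub_const t₀).const_mul _).sub
      (HasDerivAt.fun_sum fun i _ => ((hwi i).sub_const _).const_mul _)).congr_deriv
      (by simp [mul_comm])
  obtain rfl : X = dampedHamiltonianField H Γ0 := funext hX
  obtain rfl : Y = fun i => dampedHamiltonianField (h i) (Γ i) := funext fun i => funext (hY i)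
  have hdet : ∀ s ∈ Set.Icc t₀ T, HasDerivAt (fun s => LinearMap.det (fderiv ℝ (φ s) z).toLinearMap)
      ((-trΓ0 - ∑ i, deriv (w i) s * trΓ i) * LinearMap.det (fderiv ℝ (φ s) z).toLinearMap) s := by
    intro s hs
    have hjac := ContinuousLinearMap.hasDerivAt_det_of_hasDerivAt_eq_comp
      (hasDerivAt_fderiv_of_hasDerivAt_flow hφC2 (z := z)
        (G := drivenHamiltonianField H h Γ0 Γ fun i => deriv (w i) s) (fun z' => hφ z' s hs)
        (differentiable_drivenHamiltonianField hH hh Γ0 Γ _ _))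
    rwa [trace_fderiv_drivenHamiltonianField hH hh] at hjac
  have hdet₀ : LinearMap.det (fderiv ℝ (φ t₀) z).toLinearMap = 1 := by
    rw [show φ t₀ = id from funext hφ0, fderiv_id, ContinuousLinearMap.coe_id, LinearMap.det_id]
  rw [eq_exp_sub_mul_of_hasDerivAt_mul hdet hg t ht, hdet₀, mul_one]
  simp [g, trΓ0, trΓ]

theorem phase_space_volume_evolution_pathwise
    {N m : ℕ} (hN : 1 ≤ N) (hm : 1 ≤ m)
    {t₀ T : ℝ} (ht : t₀ < T)
    (H : E N × E N → ℝ) (h : Fin m → E N × E N → ℝ)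
    (hH : ContDiff ℝ 2 H) (hh : ∀ i, ContDiff ℝ 2 (h i))
    (Γ0 : E N →L[ℝ] E N) (Γ : Fin m → E N →L[ℝ] E N)
    -- the drift and noise vector fields:
    (X : E N × E N → E N × E N)
    (hX : ∀ z : E N × E N, X z = (D2 H z.1 z.2, -D1 H z.1 z.2 - Γ0 z.2))
    (Y : Fin m → E N × E N → E N × E N)
    (hY : ∀ i, ∀ z : E N × E N,
      Y i z = (D2 (h i) z.1 z.2, -D1 (h i) z.1 z.2 - Γ i z.2))
    -- the smooth noise path:
    (w : Fin m → ℝ → ℝ) (hw : ∀ i, ContDiff ℝ 1 (w i))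
    -- the flow map:
    (φ : ℝ → E N × E N → E N × E N)
    (hφC2 : ContDiff ℝ 2 (fun tz : ℝ × (E N × E N) => φ tz.1 tz.2))
    (hφ0 : ∀ z : E N × E N, φ t₀ z = z)
    (hφ : ∀ z : E N × E N, ∀ t ∈ Set.Icc t₀ T,
        HasDerivAt (fun t' => φ t' z)
          (X (φ t z) + ∑ i, deriv (w i) t • Y i (φ t z)) t) :
    ∀ t ∈ Set.Icc t₀ T, ∀ z : E N × E N,
      LinearMap.det (fderiv ℝ (φ t) z).toLinearMap
        = Real.exp (-(LinearMap.trace ℝ (E N) Γ0.toLinearMap) * (t - t₀)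
            - ∑ i, LinearMap.trace ℝ (E N) (Γ i).toLinearMap * (w i t - w i t₀)) :=
  phase_space_volume_evolution_pathwise_general H h hH hh Γ0 Γ X hX Y hY w hw φ hφC2 hφ0 hφ
end
end

section
/- Let 0 ≤ ν < 2, set ω = ½√(4 − ν²), and let β ∈ ℝ, q₀, p₀ ∈ ℝ and t ≥ 0. Let μ be the Gaussian probability measure on ℝ with mean 0 and variance t. For s ∈ ℝ put τ(s) = t + βs and define q̄(s) = e^{−ντ(s)/2} ( q₀ cos(ωτ(s)) + ω⁻¹ (p₀ + ½ν q₀) sin(ωτ(s)) ) and p̄(s) = e^{−ντ(s)/2} ( p₀ cos(ωτ(s)) − ω⁻¹ (q₀ + ½ν p₀) sin(ωτ(s)) ). Then ∫_ℝ ( ½ q̄(s)² + ½ p̄(s)² ) dμ(s) = a e^{−ν(2 − β²ν)t/2} + e^{−((2 − ν²)β² + ν)t} ( b cos( 2(1 − β²ν)ωt ) + c sin( 2(1 − β²ν)ωt ) ), where a = 2(p₀² + q₀² + ν p₀ q₀)/(4 − ν²), b = −( ν²(p₀² + q₀²) + 4ν p₀ q₀ )/( 2(4 − ν²) ), and c =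 ν(q₀² − p₀²)/( 2√(4 − ν²) ). (This is the closed-form expression (4.3) for the expected value of the Hamiltonian H(q,p) = ½p² + ½q² along the exact solution of the damped Kubo oscillator, using that W(t) ∼ N(0,t).) -/
/- STATEMENT 15: Closed-form expression (4.3) for the expected value of the Hamiltonian
   H(q,p) = ½p² + ½q² along the exact solution of the damped Kubo oscillator,
   using W(t) ∼ N(0,t). -/

noncomputable section

open MeasureTheory ProbabilityTheory
open scoped NNReal ENNReal

noncomputable section

lemma gauss_pdf_smul_eq {v : ℝ≥0} (z : ℂ) (s : ℝ) :
    ((gaussianPDFReal 0 v s).toNNReal : ℝ) • Complex.exp (z * s)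
      = ((Real.sqrt (2 * Real.pi * v))⁻¹ : ℂ)
        * Complex.exp ((-(1 / (2 * (v:ℝ))) : ℂ) * s ^ 2 + z * s + 0) := by
  rw [Real.coe_toNNReal _ (gaussianPDFReal_nonneg 0 v s), Complex.real_smul,
    gaussianPDFReal_def]
  push_cast
  rw [mul_assoc, ← Complex.exp_add]
  congr 2
  push_cast
  ring

end

section two
variable {v : ℝ≥0} (hv : v ≠ 0)

lemma gauss_var_pos (hv : v ≠ 0) : (0:ℝ) < v := by
  have := v.coe_nonneg
  rcases this.lt_or_eq with h | h
  · exact h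
  · exact absurd (by exact_mod_cast h.symm) hv

lemma gauss_b_re_neg (hv : v ≠ 0) : ((-(1 / (2 * (v:ℝ))) : ℂ)).re < 0 := by
  have := gauss_var_pos hv
  simp only [Complex.neg_re, Complex.ofReal_re]
  norm_num
  positivity

lemma gauss_cexp_integrable (hv : v ≠ 0) (z : ℂ) :
    Integrable (fun s : ℝ => Complex.exp (z * s)) (gaussianReal 0 v) := by
  rw [gaussianReal_of_var_ne_zero 0 hv]
  have hmeas : Measurable fun s : ℝ => (gaussianPDFReal 0 v s).toNNReal :=
    (measurable_gaussianPDFReal 0 v).real_toNNReal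
  have : (gaussianPDF 0 v) = fun s => ((gaussianPDFReal 0 v s).toNNReal : ℝ≥0∞) := rfl
  rw [this, integrable_withDensity_iff_integrable_smul hmeas]
  have := (integrable_cexp_quadratic' (gauss_b_re_neg hv) z 0).const_mul
    (((Real.sqrt (2 * Real.pi * v))⁻¹ : ℂ))
  exact this.congr (Filter.Eventually.of_forall fun s => (gauss_pdf_smul_eq z s).symm)

lemma gauss_cexp_integral (hv : v ≠ 0) (z : ℂ) :
    ∫ s : ℝ, Complex.exp (z * s) ∂(gaussianReal 0 v)
      = Complex.exp (z ^ 2 * (v:ℝ) / 2) := by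
  have hvpos := gauss_var_pos hv
  rw [gaussianReal_of_var_ne_zero 0 hv]
  have hmeas : Measurable fun s : ℝ => (gaussianPDFReal 0 v s).toNNReal :=
    (measurable_gaussianPDFReal 0 v).real_toNNReal
  have hpdf : (gaussianPDF 0 v) = fun s => ((gaussianPDFReal 0 v s).toNNReal : ℝ≥0∞) := rfl
  rw [hpdf, integral_withDensity_eq_integral_smul hmeas]
  have : ∀ s : ℝ, ((gaussianPDFReal 0 v s).toNNReal : ℝ≥0) • Complex.exp (z * s)
      = ((Real.sqrt (2 * Real.pi * v))⁻¹ : ℂ)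
        * Complex.exp ((-(1 / (2 * (v:ℝ))) : ℂ) * s ^ 2 + z * s + 0) := fun s =>
    gauss_pdf_smul_eq z s
  rw [integral_congr_ae (Filter.Eventually.of_forall this)]
  rw [MeasureTheory.integral_const_mul, integral_cexp_quadratic (gauss_b_re_neg hv) z 0]
  have hsq : ((Real.pi / -(-(1 / (2 * (v:ℝ))) : ℂ))) ^ (1/2 : ℂ)
      = (Real.sqrt (2 * Real.pi * v) : ℂ) := by
    have h1 : ((Real.pi / -(-(1 / (2 * (v:ℝ))) : ℂ))) = ((2 * Real.pi * v : ℝ) : ℂ) := by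
      have : ((v:ℝ):ℂ) ≠ 0 := by exact_mod_cast hvpos.ne'
      push_cast
      rw [neg_neg]
      field_simp
    rw [h1, Real.sqrt_eq_rpow,
      Complex.ofReal_cpow (by positivity : (0:ℝ) ≤ 2 * Real.pi * v)]
    norm_num
  rw [hsq]
  have harg : (0 : ℂ) - z ^ 2 / (4 * (-(1 / (2 * (v:ℝ))) : ℂ)) = z ^ 2 * (v:ℝ) / 2 := by
    have : ((v:ℝ):ℂ) ≠ 0 := by exact_mod_cast hvpos.ne'
    field_simp
    ring
  rw [harg, ← mul_assoc]
  rw [← Complex.ofReal_inv, ← Complex.ofReal_mul]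
  have : (Real.sqrt (2 * Real.pi * v))⁻¹ * Real.sqrt (2 * Real.pi * v) = 1 := by
    rw [inv_mul_cancel₀]
    positivity
  rw [this, Complex.ofReal_one, one_mul]

end two

section three
variable {v : ℝ≥0}

lemma re_of_mk (x y : ℝ) : ((x:ℂ) + (y:ℂ) * Complex.I).re = x := by simp

lemma im_of_mk (x y : ℝ) : ((x:ℂ) + (y:ℂ) * Complex.I).im = y := by simp

lemma gauss_aux_arg (v : ℝ≥0) (l m φ : ℝ) :
    ((l:ℂ) + m * Complex.I) ^ 2 * (v:ℝ) / 2 + φ * Complex.I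
      = (((l^2-m^2)*(v:ℝ)/2 : ℝ) : ℂ) + ((l*m*(v:ℝ)+φ : ℝ) : ℂ) * Complex.I := by
  push_cast
  linear_combination ((m:ℂ)^2 * ((v:ℝ):ℂ) / 2) * Complex.I_sq

lemma gauss_aux_arg' (l m φ s : ℝ) :
    ((l:ℂ) + m * Complex.I) * s + φ * Complex.I
      = ((l*s : ℝ) : ℂ) + ((m*s+φ : ℝ) : ℂ) * Complex.I := by
  push_cast
  ring

lemma gauss_cexp_full (hv : v ≠ 0) (l m φ : ℝ) :
    ∫ s : ℝ, Complex.exp (((l:ℂ) + m * Complex.I) * s + φ * Complex.I)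
        ∂(gaussianReal 0 v)
      = Complex.exp (((l:ℂ) + m * Complex.I) ^ 2 * (v:ℝ) / 2 + φ * Complex.I) := by
  simp_rw [Complex.exp_add]
  rw [MeasureTheory.integral_mul_const, gauss_cexp_integral hv]

lemma gauss_cexp_full_integrable (hv : v ≠ 0) (l m φ : ℝ) :
    Integrable (fun s : ℝ =>
      Complex.exp (((l:ℂ) + m * Complex.I) * s + φ * Complex.I)) (gaussianReal 0 v) := by
  simp_rw [Complex.exp_add]
  exact (gauss_cexp_integrable hv _).mul_const _

lemma gauss_exp_cos (hv : v ≠ 0) (l m φ : ℝ) :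
    ∫ s : ℝ, Real.exp (l*s) * Real.cos (m*s+φ) ∂(gaussianReal 0 v)
      = Real.exp ((l^2-m^2)*(v:ℝ)/2) * Real.cos (l*m*(v:ℝ)+φ) := by
  have hre : ∀ s : ℝ, Real.exp (l*s) * Real.cos (m*s+φ)
      = (Complex.exp (((l:ℂ) + m * Complex.I) * s + φ * Complex.I)).re := by
    intro s
    rw [gauss_aux_arg', Complex.exp_re, re_of_mk, im_of_mk]
  rw [integral_congr_ae (Filter.Eventually.of_forall hre)]
  have h := integral_re (gauss_cexp_full_integrable hv l m φ)
  simp only [RCLike.re_to_complex] at h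
  rw [h, gauss_cexp_full hv, gauss_aux_arg, Complex.exp_re, re_of_mk, im_of_mk]

lemma gauss_exp_sin (hv : v ≠ 0) (l m φ : ℝ) :
    ∫ s : ℝ, Real.exp (l*s) * Real.sin (m*s+φ) ∂(gaussianReal 0 v)
      = Real.exp ((l^2-m^2)*(v:ℝ)/2) * Real.sin (l*m*(v:ℝ)+φ) := by
  have hre : ∀ s : ℝ, Real.exp (l*s) * Real.sin (m*s+φ)
      = (Complex.exp (((l:ℂ) + m * Complex.I) * s + φ * Complex.I)).im := by
    intro s
    rw [gauss_aux_arg', Complex.exp_im, re_of_mk, im_of_mk]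
  rw [integral_congr_ae (Filter.Eventually.of_forall hre)]
  have h := integral_im (gauss_cexp_full_integrable hv l m φ)
  simp only [RCLike.im_to_complex] at h
  rw [h, gauss_cexp_full hv, gauss_aux_arg, Complex.exp_im, re_of_mk, im_of_mk]

lemma gauss_exp_cos_integrable (hv : v ≠ 0) (l m φ : ℝ) :
    Integrable (fun s : ℝ => Real.exp (l*s) * Real.cos (m*s+φ)) (gaussianReal 0 v) := by
  have h := (gauss_cexp_full_integrable hv l m φ).re
  refine h.congr (Filter.Eventually.of_forall fun s => ?_)
  simp only [RCLike.re_to_complex]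
  rw [gauss_aux_arg', Complex.exp_re, re_of_mk, im_of_mk]

lemma gauss_exp_sin_integrable (hv : v ≠ 0) (l m φ : ℝ) :
    Integrable (fun s : ℝ => Real.exp (l*s) * Real.sin (m*s+φ)) (gaussianReal 0 v) := by
  have h := (gauss_cexp_full_integrable hv l m φ).im
  refine h.congr (Filter.Eventually.of_forall fun s => ?_)
  simp only [RCLike.im_to_complex]
  rw [gauss_aux_arg', Complex.exp_im, re_of_mk, im_of_mk]

end three


theorem damped_kubo_expected_hamiltonian
    {ν : ℝ} (hν0 : 0 ≤ ν) (hν2 : ν < 2)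
    (ω : ℝ) (hω : ω = Real.sqrt (4 - ν ^ 2) / 2)
    (β q₀ p₀ : ℝ) {t : ℝ} (ht : 0 ≤ t)
    (τ : ℝ → ℝ) (hτ : ∀ s : ℝ, τ s = t + β * s)
    (qbar pbar : ℝ → ℝ)
    (hq : ∀ s : ℝ, qbar s = Real.exp (-ν * τ s / 2) *
        (q₀ * Real.cos (ω * τ s) + ω⁻¹ * (p₀ + ν / 2 * q₀) * Real.sin (ω * τ s)))
    (hp : ∀ s : ℝ, pbar s = Real.exp (-ν * τ s / 2) *
        (p₀ * Real.cos (ω * τ s) - ω⁻¹ * (q₀ + ν / 2 * p₀) * Real.sin (ω * τ s)))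
    (a b c : ℝ)
    (ha : a = 2 * (p₀ ^ 2 + q₀ ^ 2 + ν * p₀ * q₀) / (4 - ν ^ 2))
    (hb : b = -(ν ^ 2 * (p₀ ^ 2 + q₀ ^ 2) + 4 * ν * p₀ * q₀) / (2 * (4 - ν ^ 2)))
    (hc : c = ν * (q₀ ^ 2 - p₀ ^ 2) / (2 * Real.sqrt (4 - ν ^ 2))) :
    ∫ s : ℝ, (qbar s ^ 2 / 2 + pbar s ^ 2 / 2)
        ∂(ProbabilityTheory.gaussianReal 0 t.toNNReal)
      = a * Real.exp (-(ν * (2 - β ^ 2 * ν)) * t / 2)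
        + Real.exp (-((2 - ν ^ 2) * β ^ 2 + ν) * t)
          * (b * Real.cos (2 * (1 - β ^ 2 * ν) * ω * t)
             + c * Real.sin (2 * (1 - β ^ 2 * ν) * ω * t)) := by
  have h4 : (0:ℝ) < 4 - ν ^ 2 := by nlinarith
  have hωpos : 0 < ω := by rw [hω]; positivity
  have hω2 : ω ^ 2 = (4 - ν ^ 2) / 4 := by
    rw [hω, div_pow, Real.sq_sqrt h4.le]; norm_num
  have hsq : Real.sqrt (4 - ν ^ 2) = 2 * ω := by rw [hω]; ring
  have h4ω : 4 - ν ^ 2 = 4 * ω ^ 2 := by rw [hω2]; ring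
  rcases eq_or_lt_of_le ht with h0 | hpos
  · -- t = 0 : Dirac measure
    subst h0
    rw [Real.toNNReal_zero, ProbabilityTheory.gaussianReal_zero_var,
      MeasureTheory.integral_dirac]
    rw [hq, hp, hτ]
    norm_num
    rw [ha, hb]
    field_simp
    ring
  · have hv : t.toNNReal ≠ 0 := by
      simp only [ne_eq, Real.toNNReal_eq_zero, not_le]
      exact hpos
    have hvt : ((t.toNNReal : ℝ≥0) : ℝ) = t := Real.coe_toNNReal t ht
    have point : ∀ s : ℝ, qbar s ^ 2 / 2 + pbar s ^ 2 / 2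
        = (a * Real.exp (-ν * t)) * (Real.exp (-(ν*β) * s) * Real.cos (0 * s + 0))
        + ((b * Real.exp (-ν * t)) *
              (Real.exp (-(ν*β) * s) * Real.cos ((2*ω*β) * s + 2*ω*t))
           + (c * Real.exp (-ν * t)) *
              (Real.exp (-(ν*β) * s) * Real.sin ((2*ω*β) * s + 2*ω*t))) := by
      intro s
      have hzero : (0:ℝ) * s + 0 = 0 := by ring
      have hargeq : (2*ω*β) * s + 2*ω*t = 2 * (ω * (t + β * s)) := by ring
      rw [hq, hp, hτ, hzero, hargeq, Real.cos_zero, Real.cos_two_mul, Real.sin_two_mul]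
      rw [ha, hb, hc, hsq, h4ω]
      have hE : Real.exp (-ν * t) * Real.exp (-(ν*β) * s)
          = Real.exp (-ν * (t + β*s) / 2) ^ 2 := by
        rw [sq, ← Real.exp_add, ← Real.exp_add]; ring_nf
      have hpy : Real.sin (ω * (t + β * s)) ^ 2
          = 1 - Real.cos (ω * (t + β * s)) ^ 2 := Real.sin_sq _
      have hI : ω * ω⁻¹ = 1 := mul_inv_cancel₀ hωpos.ne'
      set E := Real.exp (-ν * (t + β*s) / 2)
      set C := Real.cos (ω * (t + β * s))
      set S := Real.sin (ω * (t + β * s))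
      linear_combination
        (- (2*(p₀^2+q₀^2+ν*p₀*q₀)/(4*ω^2)
            + (-(ν^2*(p₀^2+q₀^2)+4*ν*p₀*q₀))/(2*(4*ω^2))*(2*C^2-1)
            + (ν*(q₀^2-p₀^2))/(2*(2*ω))*(2*S*C))) * hE
        + (E^2 * (((4+ν^2)*(p₀^2+q₀^2)+8*ν*p₀*q₀) * ω⁻¹^2 / 8)) * hpy
        - (E^2 * ((p₀^2+q₀^2)*C^2*(ω*ω⁻¹+1)/2)) * hI
        + (E^2 * ((p₀^2+q₀^2)*C^2*ω⁻¹^2/2)) * hω2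
    rw [integral_congr_ae (Filter.Eventually.of_forall point)]
    have i1 : Integrable (fun s : ℝ =>
        Real.exp (-(ν*β) * s) * Real.cos (0 * s + 0))
        (gaussianReal 0 t.toNNReal) := gauss_exp_cos_integrable hv _ _ _
    have i2 : Integrable (fun s : ℝ =>
        Real.exp (-(ν*β) * s) * Real.cos ((2*ω*β) * s + 2*ω*t))
        (gaussianReal 0 t.toNNReal) := gauss_exp_cos_integrable hv _ _ _
    have i3 : Integrable (fun s : ℝ =>
        Real.exp (-(ν*β) * s) * Real.sin ((2*ω*β) * s + 2*ω*t))
        (gaussianReal 0 t.toNNReal) := gauss_exp_sin_integrable hv _ _ _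
    have iadd : Integrable (fun s : ℝ =>
        (b * Real.exp (-ν * t)) * (Real.exp (-(ν*β) * s) * Real.cos ((2*ω*β) * s + 2*ω*t))
        + (c * Real.exp (-ν * t)) * (Real.exp (-(ν*β) * s) * Real.sin ((2*ω*β) * s + 2*ω*t)))
        (gaussianReal 0 t.toNNReal) := (i2.const_mul _).add (i3.const_mul _)
    rw [MeasureTheory.integral_add (i1.const_mul _) iadd,
      MeasureTheory.integral_add (i2.const_mul _) (i3.const_mul _),
      MeasureTheory.integral_const_mul, MeasureTheory.integral_const_mul,
      MeasureTheory.integral_const_mul,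
      gauss_exp_cos hv, gauss_exp_cos hv, gauss_exp_sin hv, hvt]
    have hang : -(ν*β) * (2*ω*β) * t + 2*ω*t = 2 * (1 - β ^ 2 * ν) * ω * t := by ring
    have h00 : -(ν*β) * 0 * t + 0 = 0 := by ring
    rw [hang, h00, Real.cos_zero]
    have hexp1 : Real.exp (-ν * t) * Real.exp (((-(ν*β))^2 - 0^2) * t / 2)
        = Real.exp (-(ν * (2 - β ^ 2 * ν)) * t / 2) := by
      rw [← Real.exp_add]; congr 1; ring
    have hexp2 : Real.exp (-ν * t) * Real.exp (((-(ν*β))^2 - (2*ω*β)^2) * t / 2)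
        = Real.exp (-((2 - ν ^ 2) * β ^ 2 + ν) * t) := by
      rw [← Real.exp_add]; congr 1
      linear_combination (-2*β^2*t) * hω2
    linear_combination a * hexp1
      + (b * Real.cos (2 * (1 - β ^ 2 * ν) * ω * t)
         + c * Real.sin (2 * (1 - β ^ 2 * ν) * ω * t)) * hexp2
end
end
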